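/- arXiv:math/0603015 — 5 statements merged into one kernel-verified Lean document; each statement's English description precedes it below -/
import Mathlib

section
/- For every natural number p and every u : ℕ → Fin m, (f₁^p u)(0) = (p + u(0)) mod m, and for every i ∈ ℕ, (f₁^p u)(i+1) = (f₁^{⌊(p + u(0))/m⌋}(u ∘ Nat.succ))(i). In other words, f₁^p has the decomposition (f₁^{⌊p/m⌋}, f₁^{⌊(p+1)/m⌋}, …, f₁^{⌊(p+m-1)/m⌋}) σ^p, where σ is the cyclic permutation x_i ↦ x_{(i+1) mod m} of the alphabet acting on the first symbol. -/
/- The automaton transformation `f₀` of the Mealy automaton `I_m` acting on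
infinite words `u : ℕ → Fin m`: if `u` is constantly `m-1` it returns the
constant `0` sequence; otherwise, with `j` the least index where `u j ≠ m-1`,
it sets positions `≤ j` to `0` and keeps the rest. -/
open Classical in
noncomputable def f0 (m : ℕ) (u : ℕ → Fin m) : ℕ → Fin m :=
  if h : ∃ j, (u j : ℕ) ≠ m - 1 then
    fun i => if i ≤ Nat.find h then ⟨0, (u 0).pos⟩ else u i
  else fun _ => ⟨0, (u 0).pos⟩

/- The automaton transformation `f₁` (the base-`m` odometer): if `u` is
constantly `m-1` it returns the constant `0` sequence; otherwise, with `j` the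
least index where `u j ≠ m-1`, positions `< j` become `0`, position `j` is
incremented and the rest are kept. -/
open Classical in
noncomputable def f1 (m : ℕ) (u : ℕ → Fin m) : ℕ → Fin m :=
  if h : ∃ j, (u j : ℕ) ≠ m - 1 then
    fun i =>
      if i < Nat.find h then ⟨0, (u 0).pos⟩
      else if hie : i = Nat.find h then
        ⟨(u i : ℕ) + 1, by
          have h2 := Nat.find_spec h
          rw [← hie] at h2
          have h3 := (u i).isLt
          have h4 := (u 0).pos
          omega⟩
      else u i
  else fun _ => ⟨0, (u 0).pos⟩

open Classical in
lemma f1_zero (m : ℕ) (u : ℕ → Fin m) :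
    (f1 m u 0 : ℕ) = ((u 0 : ℕ) + 1) % m := by
  have hm : 0 < m := (u 0).pos
  have hlt := (u 0).isLt
  unfold f1
  by_cases h : ∃ j, (u j : ℕ) ≠ m - 1
  · rw [dif_pos h]
    by_cases h0 : (u 0 : ℕ) ≠ m - 1
    · have hf : Nat.find h = 0 := (Nat.find_eq_zero h).mpr h0
      simp only [hf, Nat.lt_irrefl, if_false, dif_pos rfl, dite_true]
      rw [Nat.mod_eq_of_lt (by omega)]
    · push_neg at h0
      have hf : 0 < Nat.find h := by
        rcases Nat.eq_zero_or_pos (Nat.find h) with h1 | h1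
        · exact absurd ((Nat.find_eq_zero h).mp h1) (by simp [h0])
        · exact h1
      simp only [if_pos hf]
      have h2 : (u 0 : ℕ) + 1 = m := by omega
      rw [h2, Nat.mod_self]
  · rw [dif_neg h]
    push_neg at h
    have h0 := h 0
    have h2 : (u 0 : ℕ) + 1 = m := by omega
    simp only [Fin.val_mk]
    rw [h2, Nat.mod_self]

open Classical in
lemma f1_succ_of_ne (m : ℕ) (u : ℕ → Fin m) (h0 : (u 0 : ℕ) ≠ m - 1) (i : ℕ) :
    f1 m u (i + 1) = u (i + 1) := by
  have h : ∃ j, (u j : ℕ) ≠ m - 1 := ⟨0, h0⟩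
  have hf : Nat.find h = 0 := (Nat.find_eq_zero h).mpr h0
  unfold f1
  rw [dif_pos h]
  simp [hf]

open Classical in
lemma f1_succ_of_eq (m : ℕ) (u : ℕ → Fin m) (h0 : (u 0 : ℕ) = m - 1) (i : ℕ) :
    f1 m u (i + 1) = f1 m (u ∘ Nat.succ) i := by
  by_cases h' : ∃ j, ((u ∘ Nat.succ) j : ℕ) ≠ m - 1
  · obtain ⟨j, hj⟩ := h'
    have h : ∃ j, (u j : ℕ) ≠ m - 1 := ⟨j + 1, hj⟩
    have h' : ∃ j, ((u ∘ Nat.succ) j : ℕ) ≠ m - 1 := ⟨j, hj⟩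
    have hf : Nat.find h = Nat.find h' + 1 := by
      have h1 : Nat.find h ≤ Nat.find h' + 1 := Nat.find_le (Nat.find_spec h')
      have h2 : 0 < Nat.find h := by
        rcases Nat.eq_zero_or_pos (Nat.find h) with hz | hz
        · exact absurd ((Nat.find_eq_zero h).mp hz) (by simp [h0])
        · exact hz
      have h3 : Nat.find h' ≤ Nat.find h - 1 := by
        apply Nat.find_le
        show ((u (Nat.find h - 1 + 1) : ℕ) ≠ m - 1)
        have he : Nat.find h - 1 + 1 = Nat.find h := by omega
        rw [he]
        exact Nat.find_spec h
      omega
    unfold f1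
    rw [dif_pos h, dif_pos h']
    simp only [hf]
    by_cases hc1 : i < Nat.find h'
    · rw [if_pos (by omega : i + 1 < Nat.find h' + 1), if_pos hc1]
    · rw [if_neg (by omega), if_neg hc1]
      by_cases hc2 : i = Nat.find h'
      · rw [dif_pos (by omega : i + 1 = Nat.find h' + 1), dif_pos hc2]; rfl
      · rw [dif_neg (by omega), dif_neg hc2]
        rfl
  · have h : ¬ ∃ j, (u j : ℕ) ≠ m - 1 := by
      push_neg at h' ⊢
      intro j
      cases j with
      | zero => exact h0
      | succ k => exact h' k
    unfold f1
    rw [dif_neg h, dif_neg h']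


/-- Decomposition of `f₁^p`: on the first symbol it acts as `σ^p`, the `p`-th
power of the cyclic permutation of the alphabet, and on the tail it acts as
`f₁^{⌊(p + u 0)/m⌋}`. -/
theorem f1_iterate_decomposition (m : ℕ) (hm : 2 ≤ m) (p : ℕ) (u : ℕ → Fin m) :
    (((f1 m)^[p] u) 0 : ℕ) = (p + (u 0 : ℕ)) % m ∧
    ∀ i : ℕ, ((f1 m)^[p] u) (i + 1) =
      ((f1 m)^[(p + (u 0 : ℕ)) / m] (u ∘ Nat.succ)) i := by
  induction p with
  | zero =>
    constructor
    · simp [Nat.mod_eq_of_lt (u 0).isLt]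
    · intro i
      rw [Nat.zero_add, Nat.div_eq_of_lt (u 0).isLt]
      rfl
  | succ p ih =>
    obtain ⟨ih0, ihs⟩ := ih
    set v := (f1 m)^[p] u with hv
    have hiter : (f1 m)^[p + 1] u = f1 m v := by
      rw [Function.iterate_succ_apply']
    have hdm := Nat.div_add_mod (p + (u 0 : ℕ)) m
    constructor
    · rw [hiter, f1_zero, ih0]
      have he : (p + 1 + (u 0 : ℕ)) = (p + (u 0 : ℕ)) + 1 := by omega
      rw [he, Nat.add_mod (p + (u 0 : ℕ)) 1 m, Nat.one_mod_eq_one.mpr (by omega)]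
    · intro i
      rw [hiter]
      by_cases hc : (v 0 : ℕ) = m - 1
      · rw [ih0] at hc
        have hdiv : (p + 1 + (u 0 : ℕ)) / m = (p + (u 0 : ℕ)) / m + 1 := by
          have h3 : m * ((p + (u 0:ℕ))/m + 1) = m * ((p + (u 0:ℕ))/m) + m := by ring
          have h2 : p + 1 + (u 0:ℕ) = m * ((p + (u 0:ℕ))/m + 1) := by omega
          rw [h2, Nat.mul_div_cancel_left _ (by omega : 0 < m)]
        rw [hdiv, f1_succ_of_eq m v (by rw [ih0]; exact hc) i,
          Function.iterate_succ_apply']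
        congr 1
        funext j
        exact ihs j
      · rw [ih0] at hc
        have h1 : (p + (u 0 : ℕ)) % m < m := Nat.mod_lt _ (by omega)
        have hdiv : (p + 1 + (u 0 : ℕ)) / m = (p + (u 0 : ℕ)) / m := by
          have h3 : ((p + (u 0:ℕ))/m) * m = m * ((p + (u 0:ℕ))/m) := by ring
          have h4 : ((p + (u 0:ℕ))/m + 1) * m = m * ((p + (u 0:ℕ))/m) + m := by ring
          exact Nat.div_eq_of_lt_le (by omega) (by omega)
        rw [hdiv, f1_succ_of_ne m v (by rw [ih0]; exact hc) i]
        exact ihs i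
end

section
/- For every k ≥ 0 and every integer p with 1 ≤ p ≤ m-1, the relation R_A(k,p) holds: f₀ ∘ f₁^{p·m^k - 1} ∘ v_k = v_k as self-maps of ℕ → Fin m. Moreover, for every k ≥ 0 the relation R_B(k) holds: f₀ ∘ f₁^{m^k + m^{k+1} - 1} ∘ v_k = f₁^{m^{k+1}} ∘ v_k. -/
/- The transformations `v_k`: `v₀ = f₀` and `v_k = f₀ ∘ f₁^{m^k - 1} ∘ v_{k-1}`. -/
noncomputable def vW (m : ℕ) : ℕ → (ℕ → Fin m) → ℕ → Fin m
  | 0 => f0 m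
  | k + 1 => f0 m ∘ (f1 m)^[m ^ (k + 1) - 1] ∘ vW m k

open Function

def consSeq {α : Type*} (a : α) (u : ℕ → α) : ℕ → α
  | 0 => a
  | i + 1 => u i

lemma consSeq_head_tail {α : Type*} (u : ℕ → α) : consSeq (u 0) (fun i => u (i + 1)) = u := by
  funext i; cases i <;> rfl

section ConsSeq

-- Over `Fin (n + 1)` the letter `m - 1` is `Fin.last n`, and letters below it are `castSucc`s.
variable {n : ℕ} (u : ℕ → Fin (n + 1))

lemma f1_consSeq_castSucc (i : Fin n) :
    f1 (n + 1) (consSeq i.castSucc u) = consSeq i.succ u := by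
  have h0 : ((consSeq i.castSucc u 0 : Fin (n + 1)) : ℕ) ≠ n + 1 - 1 := by simp [consSeq]; omega
  have h : ∃ j, ((consSeq i.castSucc u j : Fin (n + 1)) : ℕ) ≠ n + 1 - 1 := ⟨0, h0⟩
  funext j
  simp only [f1, dif_pos h, (Nat.find_eq_zero h).2 h0]
  cases j <;> simp [consSeq, Fin.ext_iff]

lemma f0_consSeq_castSucc (i : Fin n) : f0 (n + 1) (consSeq i.castSucc u) = consSeq 0 u := by
  have h0 : ((consSeq i.castSucc u 0 : Fin (n + 1)) : ℕ) ≠ n + 1 - 1 := by simp [consSeq]; omega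
  have h : ∃ j, ((consSeq i.castSucc u j : Fin (n + 1)) : ℕ) ≠ n + 1 - 1 := ⟨0, h0⟩
  funext j
  simp only [f0, dif_pos h, (Nat.find_eq_zero h).2 h0]
  cases j <;> simp [consSeq]

lemma exists_consSeq_last_ne_iff :
    (∃ j, ((consSeq (Fin.last n) u j : Fin (n + 1)) : ℕ) ≠ n + 1 - 1) ↔
      ∃ j, (u j : ℕ) ≠ n + 1 - 1 := by
  refine ⟨fun ⟨j, hj⟩ => ?_, fun ⟨j, hj⟩ => ⟨j + 1, hj⟩⟩
  cases j with
  | zero => simp [consSeq] at hj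
  | succ j => exact ⟨j, hj⟩

lemma f1_consSeq_last : f1 (n + 1) (consSeq (Fin.last n) u) = consSeq 0 (f1 (n + 1) u) := by
  funext j
  by_cases h : ∃ j, (u j : ℕ) ≠ n + 1 - 1
  · have h' := (exists_consSeq_last_ne_iff u).2 h
    simp only [f1, dif_pos h, dif_pos h', Nat.find_comp_succ h' h (by simp [consSeq])]
    rcases j with _ | j
    · simp [consSeq]
    · by_cases hj : j = Nat.find h <;> simp [consSeq, hj]
  · simp only [f1, dif_neg h, dif_neg (mt (exists_consSeq_last_ne_iff u).1 h)]
    cases j <;> simp [consSeq]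

lemma f0_consSeq_last : f0 (n + 1) (consSeq (Fin.last n) u) = consSeq 0 (f0 (n + 1) u) := by
  funext j
  by_cases h : ∃ j, (u j : ℕ) ≠ n + 1 - 1
  · have h' := (exists_consSeq_last_ne_iff u).2 h
    simp only [f0, dif_pos h, dif_pos h', Nat.find_comp_succ h' h (by simp [consSeq])]
    cases j <;> simp [consSeq]
  · simp only [f0, dif_neg h, dif_neg (mt (exists_consSeq_last_ne_iff u).1 h)]
    cases j <;> simp [consSeq]

lemma exists_f0_eq_consSeq_zero : ∃ t, f0 (n + 1) u = consSeq 0 t := by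
  rw [← consSeq_head_tail u]
  obtain ⟨i, hi⟩ | hlast := Fin.eq_castSucc_or_eq_last (u 0)
  · exact ⟨_, by rw [hi, f0_consSeq_castSucc]⟩
  · exact ⟨_, by rw [hlast, f0_consSeq_last]⟩

lemma f1_iterate_consSeq_zero (d : Fin (n + 1)) :
    (f1 (n + 1))^[d] (consSeq 0 u) = consSeq d u := by
  induction d using Fin.induction with
  | zero => rfl
  | succ i ih =>
    rw [Fin.val_succ, iterate_succ_apply', ← Fin.val_castSucc, ih, f1_consSeq_castSucc]

end ConsSeq

lemma semiconj_consSeq_zero_f1 (n : ℕ) :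
    Semiconj (consSeq (0 : Fin (n + 1))) (f1 (n + 1)) (f1 (n + 1))^[n + 1] := fun u => by
  have h := f1_iterate_consSeq_zero u (Fin.last n)
  rw [Fin.val_last] at h
  rw [iterate_succ_apply', h, f1_consSeq_last]

lemma f1_iterate_add_mul_consSeq_zero {n : ℕ} (u : ℕ → Fin (n + 1)) (d : Fin (n + 1))
    (q : ℕ) :
    (f1 (n + 1))^[d + (n + 1) * q] (consSeq 0 u) = consSeq d ((f1 (n + 1))^[q] u) := by
  rw [iterate_add_apply, iterate_mul, ← ((semiconj_consSeq_zero_f1 n).iterate_right q).eq,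
    f1_iterate_consSeq_zero]

lemma semiconj_f0_consSeq_last (n : ℕ) :
    Semiconj (f0 (n + 1)) (consSeq (Fin.last n)) (consSeq 0) :=
  f0_consSeq_last

lemma semiconj_iterate_consSeq_zero_f1 (n k : ℕ) :
    Semiconj (consSeq (0 : Fin (n + 1)))^[k] (f1 (n + 1)) (f1 (n + 1))^[(n + 1) ^ k] := by
  induction k with
  | zero => exact Semiconj.id_left
  | succ k ih =>
    rw [iterate_succ', pow_succ', iterate_mul]
    exact ((semiconj_consSeq_zero_f1 n).iterate_right _).comp_left ih

lemma f1_iterate_iterate_consSeq_zero {n : ℕ} (t : ℕ → Fin (n + 1)) (d : Fin (n + 1))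
    (k : ℕ) :
    (f1 (n + 1))^[(d + 1) * (n + 1) ^ k - 1] ((consSeq 0)^[k + 1] t) =
      (consSeq (Fin.last n))^[k] (consSeq d t) := by
  induction k with
  | zero => simpa using f1_iterate_consSeq_zero t d
  | succ k ih =>
    obtain ⟨M, hM⟩ : ∃ M, (d + 1) * (n + 1) ^ k = M + 1 :=
      ⟨_, (Nat.succ_pred_eq_of_pos (by positivity)).symm⟩
    have hcount : (d + 1) * (n + 1) ^ (k + 1) - 1 = (Fin.last n : ℕ) + (n + 1) * M := by
      rw [pow_succ, ← mul_assoc, hM, Fin.val_last]; ring_nf; omega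
    rw [hcount, iterate_succ_apply', f1_iterate_add_mul_consSeq_zero,
      show M = (d + 1) * (n + 1) ^ k - 1 by omega, ih, iterate_succ_apply']

lemma f0_f1_iterate_iterate_consSeq_zero {n : ℕ} (t : ℕ → Fin (n + 1)) (k p : ℕ)
    (hp : 1 ≤ p) (hpn : p ≤ n) :
    f0 (n + 1) ((f1 (n + 1))^[p * (n + 1) ^ k - 1] ((consSeq 0)^[k + 1] t)) =
      (consSeq 0)^[k + 1] t := by
  have h := f1_iterate_iterate_consSeq_zero t (Fin.castSucc ⟨p - 1, by omega⟩) k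
  rw [Fin.val_castSucc, Nat.sub_add_cancel hp] at h
  rw [h, ((semiconj_f0_consSeq_last n).iterate_right k).eq, f0_consSeq_castSucc,
    iterate_succ_apply]

lemma exists_vW_eq_iterate_consSeq_zero (n k : ℕ) (u : ℕ → Fin (n + 1)) :
    ∃ t, vW (n + 1) k u = (consSeq 0)^[k + 1] t := by
  induction k with
  | zero => exact exists_f0_eq_consSeq_zero u
  | succ k ih =>
    obtain ⟨t, ht⟩ := ih
    obtain ⟨t', ht'⟩ := exists_f0_eq_consSeq_zero t
    have h := f1_iterate_iterate_consSeq_zero t (Fin.last n) k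
    rw [Fin.val_last, ← pow_succ', ← iterate_succ_apply] at h
    refine ⟨t', ?_⟩
    rw [vW, comp_apply, comp_apply, ht, h, ((semiconj_f0_consSeq_last n).iterate_right _).eq, ht',
      ← iterate_succ_apply]

/-- The relations `R_A(k,p) : f₀ f₁^{p m^k - 1} v_k = v_k` (for `1 ≤ p ≤ m-1`)
and `R_B(k) : f₀ f₁^{m^k + m^{k+1} - 1} v_k = f₁^{m^{k+1}} v_k` hold. -/
theorem relations_RA_RB (m : ℕ) (hm : 2 ≤ m) :
    (∀ k p : ℕ, 1 ≤ p → p ≤ m - 1 →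
      f0 m ∘ (f1 m)^[p * m ^ k - 1] ∘ vW m k = vW m k) ∧
    (∀ k : ℕ,
      f0 m ∘ (f1 m)^[m ^ k + m ^ (k + 1) - 1] ∘ vW m k =
        (f1 m)^[m ^ (k + 1)] ∘ vW m k) := by
  obtain ⟨n, rfl⟩ : ∃ n, m = n + 1 := ⟨m - 1, by omega⟩
  refine ⟨fun k p hp hpn => funext fun u => ?_, fun k => funext fun u => ?_⟩
  · obtain ⟨t, ht⟩ := exists_vW_eq_iterate_consSeq_zero n k u
    rw [comp_apply, comp_apply, ht]
    exact f0_f1_iterate_iterate_consSeq_zero t k p hp (by omega)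
  · obtain ⟨t, ht⟩ := exists_vW_eq_iterate_consSeq_zero n k u
    have hcount :
        (n + 1) ^ k + (n + 1) ^ (k + 1) - 1 = (1 * (n + 1) ^ k - 1) + (n + 1) ^ (k + 1) := by
      have : 0 < (n + 1) ^ k := by positivity
      omega
    rw [comp_apply, comp_apply, comp_apply, ht, hcount, iterate_add_apply,
      ← (semiconj_iterate_consSeq_zero_f1 n (k + 1)).eq]
    exact f0_f1_iterate_iterate_consSeq_zero _ k 1 le_rfl (by omega)
end

section
/- The word growth function satisfies the functional equation γ_m(n+1) = γ_m(n) + γ_m(⌊n/m⌋) for every n ≥ 0. -/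
/- The automaton transformation monoid `S_m`: the set of self-maps of
`ℕ → Fin m` that are finite compositions of maps from `{f₀, f₁}`. -/
def SM (m : ℕ) : Set ((ℕ → Fin m) → ℕ → Fin m) :=
  {s | ∃ L : List ((ℕ → Fin m) → ℕ → Fin m),
    (∀ g ∈ L, g = f0 m ∨ g = f1 m) ∧ L.foldr (· ∘ ·) id = s}

/- The length `ℓ(s)`: the least `n` such that `s` is a composition of `n` maps,
each equal to `f₀` or `f₁` (so `ℓ(id) = 0`). -/
noncomputable def wordLength (m : ℕ) (s : (ℕ → Fin m) → ℕ → Fin m) : ℕ :=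
  sInf {n | ∃ L : List ((ℕ → Fin m) → ℕ → Fin m),
    L.length = n ∧ (∀ g ∈ L, g = f0 m ∨ g = f1 m) ∧ L.foldr (· ∘ ·) id = s}

/- The word growth function `γ_m(n) = card {s ∈ S_m : ℓ(s) = n}`. -/
noncomputable def gammaW (m n : ℕ) : ℕ :=
  Set.ncard {s | s ∈ SM m ∧ wordLength m s = n}

/- The growth function `Γ_m(n) = card {s ∈ S_m : ℓ(s) ≤ n}`. -/
noncomputable def GammaG (m n : ℕ) : ℕ :=
  Set.ncard {s | s ∈ SM m ∧ wordLength m s ≤ n}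

/-!
Read a word `u : ℕ → Fin m` as an `m`-adic integer whose `i`-th digit is `u i`. Then `f₁` is
`z ↦ z + 1` and `f₀` is `z ↦ m * D (z + 1)`, where `m * D s` is `s` with its lowest nonzero digit
cleared. Both maps are causal (digit `i` of the image depends only on digits `≤ i`), and every
prefix of digits is that of an integer, so an element of `S_m` is determined by its action on
`ℤ ⊆ ℤ_m`.

On `ℤ` every word can be rewritten, without getting longer, as a normal form
`x ↦ b + m ^ k * T_L x` with `T_[c₁, …, c_k] = D (· + c_k + 1) ∘ ⋯ ∘ D (· + c₁ + 1)`, of length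
`b + ∑ (cᵢ + 1) m ^ (i - 1)`, and each normal form is realised by a word of exactly that length.
Distinct normal forms are distinct maps: the image `b + m ^ k ℤ` determines `k`, and if two tails
start with `c₁ < c₁'`, then along `x = m ^ N - (c₁ + 1)` the first is constant while the second
grows like `m ^ (N - k)`.
Hence `γ_m(n)` counts the normal forms of length `n`. Those of length `n + 1` have either `b > 0`
(lower `b` by one) or `b = 0` and `L = (m * b' + n % m) :: L'` with `(b', L')` of length `n / m`.
-/

namespace Odometer

variable {m : ℕ}

-- `m * dropDigit m s` is `s` with its lowest nonzero base-`m` digit replaced by `0`.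
def dropDigit (m : ℕ) (s : ℤ) : ℤ :=
  if 1 < m ∧ s ≠ 0 ∧ (m : ℤ) ∣ s then m * dropDigit m (s / m) else s / m
termination_by s.natAbs
decreasing_by
  obtain ⟨hm, hs, t, rfl⟩ := ‹1 < m ∧ _ ∧ _›
  have ht : t ≠ 0 := by rintro rfl; simp at hs
  rw [Int.mul_ediv_cancel_left _ (by omega), Int.natAbs_mul, Int.natAbs_natCast]
  exact lt_mul_left (Int.natAbs_pos.mpr ht) hm

theorem dropDigit_of_not_dvd {s : ℤ} (h : ¬ (m : ℤ) ∣ s) : dropDigit m s = s / m := by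
  rw [dropDigit, if_neg (by tauto)]

@[simp] theorem dropDigit_zero : dropDigit m 0 = 0 := by
  rw [dropDigit, if_neg (by simp)]; simp

theorem dropDigit_mul (hm : 1 < m) (t : ℤ) : dropDigit m (m * t) = m * dropDigit m t := by
  rcases eq_or_ne t 0 with rfl | ht
  · simp
  · rw [dropDigit, if_pos ⟨hm, mul_ne_zero (by omega) ht, dvd_mul_right _ _⟩,
      Int.mul_ediv_cancel_left _ (by omega)]

theorem dropDigit_induction (hm : 1 < m) {P : ℤ → Prop} (zero : P 0)
    (not_dvd : ∀ s, ¬ (m : ℤ) ∣ s → P s) (mul : ∀ t, t ≠ 0 → P t → P (m * t)) (s : ℤ) :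
    P s := by
  induction h : s.natAbs using Nat.strong_induction_on generalizing s with
  | _ n ih =>
    by_cases hdvd : (m : ℤ) ∣ s
    · obtain ⟨t, rfl⟩ := hdvd
      rcases eq_or_ne t 0 with rfl | ht
      · simpa using zero
      · refine mul t ht (ih _ ?_ t rfl)
        rw [← h, Int.natAbs_mul, Int.natAbs_natCast]
        exact lt_mul_left (Int.natAbs_pos.mpr ht) hm
    · exact not_dvd s hdvd

theorem dropDigit_pow_mul (hm : 1 < m) (k : ℕ) (y : ℤ) :
    dropDigit m ((m : ℤ) ^ k * y) = (m : ℤ) ^ k * dropDigit m y := by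
  induction k with
  | zero => simp
  | succ k ih => rw [pow_succ', mul_assoc, dropDigit_mul hm, ih, mul_assoc]

theorem dropDigit_mul_add_one (hm : 1 < m) (t : ℤ) : dropDigit m (m * t + 1) = t := by
  have hm' : (1 : ℤ) < m := by exact_mod_cast hm
  have hndvd : ¬ (m : ℤ) ∣ 1 := fun h => by have := Int.le_of_dvd one_pos h; omega
  rw [dropDigit_of_not_dvd ((Int.dvd_add_right (dvd_mul_right _ _)).not.mpr hndvd),
    add_comm, Int.add_mul_ediv_left _ _ (by omega), Int.ediv_eq_zero_of_lt zero_le_one hm',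
    zero_add]

theorem dropDigit_pow (hm : 1 < m) (k : ℕ) : dropDigit m ((m : ℤ) ^ k) = 0 := by
  have h1 : dropDigit m 1 = 0 := by simpa using dropDigit_mul_add_one hm 0
  simpa [h1] using dropDigit_pow_mul hm k 1

theorem dropDigit_add_pow_mul (hm : 1 < m) {s : ℤ} {k : ℕ} (hs : ¬ (m : ℤ) ^ (k + 1) ∣ s)
    (y : ℤ) : dropDigit m (s + (m : ℤ) ^ (k + 1) * y) = dropDigit m s + (m : ℤ) ^ k * y := by
  induction s using dropDigit_induction hm generalizing k with
  | zero => simp at hs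
  | not_dvd s hdvd =>
    have hdvd' : ¬ (m : ℤ) ∣ s + (m : ℤ) ^ (k + 1) * y := by
      rwa [pow_succ', mul_assoc, Int.dvd_add_left (dvd_mul_right _ _)]
    rw [dropDigit_of_not_dvd hdvd, dropDigit_of_not_dvd hdvd', pow_succ', mul_assoc,
      Int.add_mul_ediv_left _ _ (by omega)]
  | mul t _ ih =>
    cases k with
    | zero => simp at hs
    | succ k =>
      rw [pow_succ' _ (k + 1), mul_dvd_mul_iff_left (by omega)] at hs
      rw [pow_succ' _ (k + 1), mul_assoc, ← mul_add, dropDigit_mul hm, dropDigit_mul hm,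
        ih hs, mul_add, pow_succ', mul_assoc]

theorem dropDigit_nonneg_and_mul_lt (hm : 1 < m) {s : ℤ} (hs : 0 < s) :
    0 ≤ dropDigit m s ∧ m * dropDigit m s < s := by
  have hm' : (1 : ℤ) < m := by exact_mod_cast hm
  induction s using dropDigit_induction hm with
  | zero => exact absurd hs (lt_irrefl 0)
  | not_dvd s hdvd =>
    rw [dropDigit_of_not_dvd hdvd]
    refine ⟨Int.ediv_nonneg hs.le (by omega), ?_⟩
    have := (Int.emod_pos_of_not_dvd hdvd).resolve_left (by omega)
    linarith [Int.mul_ediv_add_emod s m]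
  | mul t _ ih =>
    have ht : 0 < t := pos_of_mul_pos_right hs (by omega)
    obtain ⟨h0, hlt⟩ := ih ht
    rw [dropDigit_mul hm]
    exact ⟨by positivity, by nlinarith⟩

-- With `Int.ediv` and `Int.emod` these are the `m`-adic digits of `z`, also when `z < 0`.
def digit (m : ℕ) (z : ℤ) (i : ℕ) : ℤ := z / (m : ℤ) ^ i % m

@[simp] theorem digit_zero (z : ℤ) : digit m z 0 = z % m := by simp [digit]

theorem digit_succ (z : ℤ) (i : ℕ) : digit m z (i + 1) = digit m (z / m) i := by
  rw [digit, digit, pow_succ', Int.ediv_ediv_of_nonneg (Int.natCast_nonneg m)]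

theorem digit_nonneg (hm : 0 < m) (z : ℤ) (i : ℕ) : 0 ≤ digit m z i :=
  Int.emod_nonneg _ (by omega)

theorem digit_lt (hm : 0 < m) (z : ℤ) (i : ℕ) : digit m z i < m :=
  Int.emod_lt_of_pos _ (by omega)

theorem emod_eq_pred_iff_dvd_add_one (hm : 0 < m) (z : ℤ) :
    z % m = m - 1 ↔ (m : ℤ) ∣ z + 1 := by
  have h0 := Int.emod_nonneg z (show (m : ℤ) ≠ 0 by omega)
  have h1 := Int.emod_lt_of_pos z (show (0 : ℤ) < m by omega)
  rw [Int.dvd_iff_emod_eq_zero, ← Int.emod_add_emod]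
  constructor
  · intro h; rw [h, sub_add_cancel, Int.emod_self]
  · intro h
    by_contra hne
    rw [Int.emod_eq_of_lt (by omega) (by omega)] at h
    omega

theorem add_one_ediv (hm : 0 < m) (z : ℤ) :
    (z + 1) / m = z / m + if (m : ℤ) ∣ z + 1 then 1 else 0 := by
  have h0 := Int.emod_nonneg z (show (m : ℤ) ≠ 0 by omega)
  have h1 := Int.emod_lt_of_pos z (show (0 : ℤ) < m by omega)
  have hz : z + 1 = (z % m + 1) + m * (z / m) := by linarith [Int.emod_add_mul_ediv z m]
  have hq : (z + 1) / m = (z % m + 1) / m + z / m := by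
    rw [hz, Int.add_mul_ediv_left _ _ (by omega)]
  rw [hq, add_comm]
  split_ifs with h <;> rw [← emod_eq_pred_iff_dvd_add_one hm] at h
  · rw [h, sub_add_cancel, Int.ediv_self (by omega)]
  · rw [Int.ediv_eq_zero_of_lt (a := z % m + 1) (by omega) (by omega)]

theorem not_pow_succ_dvd {a : ℤ} (h : ¬ (m : ℤ) ∣ a) (i : ℕ) : ¬ (m : ℤ) ^ (i + 1) ∣ a :=
  fun hi => h ((dvd_pow_self _ i.succ_ne_zero).trans hi)

theorem pow_succ_dvd_iff_of_dvd {a : ℤ} (hm : 0 < m) (h : (m : ℤ) ∣ a) (i : ℕ) :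
    (m : ℤ) ^ (i + 1) ∣ a ↔ (m : ℤ) ^ i ∣ a / m := by
  obtain ⟨b, rfl⟩ := h
  rw [pow_succ', Int.mul_ediv_cancel_left _ (by omega), mul_dvd_mul_iff_left (by omega)]

theorem digit_add_one (hm : 0 < m) (z : ℤ) (i : ℕ) :
    digit m (z + 1) i = if (m : ℤ) ^ i ∣ z + 1 then (digit m z i + 1) % m else digit m z i := by
  induction i generalizing z with
  | zero => simp [Int.emod_add_emod]
  | succ i ih =>
    rw [digit_succ, digit_succ, add_one_ediv hm]
    by_cases h : (m : ℤ) ∣ z + 1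
    · simp only [if_pos h, ih, pow_succ_dvd_iff_of_dvd hm h, add_one_ediv hm]
    · rw [if_neg h, if_neg (not_pow_succ_dvd h i), add_zero]

theorem pow_dvd_add_one_iff (hm : 0 < m) (z : ℤ) (i : ℕ) :
    (m : ℤ) ^ i ∣ z + 1 ↔ ∀ k < i, digit m z k = m - 1 := by
  induction i generalizing z with
  | zero => simp
  | succ i ih =>
    rw [Nat.forall_lt_succ_left, digit_zero, emod_eq_pred_iff_dvd_add_one hm]
    simp only [digit_succ]
    by_cases h : (m : ℤ) ∣ z + 1
    · rw [pow_succ_dvd_iff_of_dvd hm h, add_one_ediv hm, if_pos h, ih]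
      exact ⟨fun h' => ⟨h, h'⟩, fun h' => h'.2⟩
    · exact ⟨fun hi => absurd hi (not_pow_succ_dvd h i), fun h' => absurd h'.1 h⟩

theorem digit_mul_dropDigit (hm : 1 < m) (s : ℤ) (i : ℕ) :
    digit m (m * dropDigit m s) i = if (m : ℤ) ^ i ∣ s then 0 else digit m s i := by
  have hm0 : (m : ℤ) ≠ 0 := by omega
  induction s using dropDigit_induction hm generalizing i with
  | zero => simp [digit]
  | not_dvd s hs =>
    rw [dropDigit_of_not_dvd hs]
    cases i with
    | zero => simp
    | succ i =>
      rw [if_neg (not_pow_succ_dvd hs i), digit_succ, digit_succ, Int.mul_ediv_cancel_left _ hm0]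
  | mul t _ ih =>
    cases i with
    | zero => simp
    | succ i =>
      rw [dropDigit_mul hm, digit_succ, digit_succ, Int.mul_ediv_cancel_left _ hm0,
        Int.mul_ediv_cancel_left _ hm0, ih]
      simp only [pow_succ', mul_dvd_mul_iff_left hm0]

theorem pow_dvd_sub_of_digit_eq {z z' : ℤ} (h : ∀ i, digit m z i = digit m z' i) (i : ℕ) :
    (m : ℤ) ^ i ∣ z - z' := by
  induction i generalizing z z' with
  | zero => simp
  | succ i ih =>
    have h0 : z % m = z' % m := by simpa using h 0
    have hq := ih (z := z / m) (z' := z' / m) (fun k => by simpa [digit_succ] using h (k + 1))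
    have hz : z - z' = m * (z / m - z' / m) := by
      linarith [Int.emod_add_mul_ediv z m, Int.emod_add_mul_ediv z' m]
    rw [hz, pow_succ']
    exact mul_dvd_mul_left _ hq

theorem eq_of_digit_eq (hm : 1 < m) {z z' : ℤ} (h : ∀ i, digit m z i = digit m z' i) : z = z' := by
  have hlt : (z - z').natAbs < ((m : ℤ) ^ (z - z').natAbs).natAbs := by
    rw [Int.natAbs_pow, Int.natAbs_natCast]
    exact Nat.lt_pow_self hm
  exact sub_eq_zero.mp (Int.eq_zero_of_dvd_of_natAbs_lt_natAbs (pow_dvd_sub_of_digit_eq h _) hlt)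

theorem exists_digit_eq (u : ℕ → Fin m) (i : ℕ) : ∃ z, ∀ k ≤ i, digit m z k = u k := by
  have hdigit : ∀ (c : Fin m) (z : ℤ), digit m (c + m * z) 0 = c := fun c z => by
    rw [digit_zero, Int.add_mul_emod_self_left]
    exact Int.emod_eq_of_lt (by omega) (by exact_mod_cast c.isLt)
  induction i generalizing u with
  | zero => exact ⟨u 0, fun k hk => by simpa [Nat.le_zero.mp hk] using hdigit (u 0) 0⟩
  | succ i ih =>
    obtain ⟨z, hz⟩ := ih (fun k => u (k + 1))
    refine ⟨u 0 + m * z, fun k hk => ?_⟩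
    cases k with
    | zero => exact hdigit (u 0) z
    | succ k =>
      have hm : (m : ℤ) ≠ 0 := by have := (u 0).pos; omega
      rw [digit_succ, Int.add_mul_ediv_left _ _ hm,
        Int.ediv_eq_zero_of_lt (by omega) (by exact_mod_cast (u 0).isLt), zero_add]
      exact hz k (by omega)

theorem carry_iff_le_find {u : ℕ → Fin m} (h : ∃ j, (u j : ℕ) ≠ m - 1) (i : ℕ) :
    (∀ k < i, (u k : ℕ) = m - 1) ↔ i ≤ Nat.find h := by
  simp [Nat.le_find_iff]

theorem f1_val (u : ℕ → Fin m) (i : ℕ) :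
    (f1 m u i : ℕ) = if ∀ k < i, (u k : ℕ) = m - 1 then ((u i : ℕ) + 1) % m else u i := by
  have hm := (u 0).pos
  unfold f1
  by_cases h : ∃ j, (u j : ℕ) ≠ m - 1
  · have hui := (u i).isLt
    rw [dif_pos h]
    simp only [carry_iff_le_find h]
    rcases lt_trichotomy i (Nat.find h) with hi | rfl | hi
    · have : (u i : ℕ) = m - 1 := by simpa using Nat.find_min h hi
      simp [hi, hi.le, this, Nat.sub_add_cancel hm]
    · have := Nat.find_spec h
      simp [Nat.mod_eq_of_lt (show (u (Nat.find h) : ℕ) + 1 < m by omega)]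
    · rw [if_neg (not_lt.mpr hi.le), dif_neg hi.ne', if_neg (not_le.mpr hi)]
  · push Not at h
    simp [h, Nat.sub_add_cancel hm]

theorem f0_val (u : ℕ → Fin m) (i : ℕ) :
    (f0 m u i : ℕ) = if ∀ k < i, (u k : ℕ) = m - 1 then 0 else (u i : ℕ) := by
  unfold f0
  by_cases h : ∃ j, (u j : ℕ) ≠ m - 1
  · rw [dif_pos h]
    simp only [carry_iff_le_find h]
    split_ifs <;> rfl
  · push Not at h
    simp [h]

def toDigits (m : ℕ) [NeZero m] (z : ℤ) (i : ℕ) : Fin m :=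
  ⟨(digit m z i).toNat, by
    have := Nat.pos_of_neZero m
    have := digit_lt this z i
    omega⟩

section toDigits

variable [NeZero m]

theorem toDigits_val (z : ℤ) (i : ℕ) : ((toDigits m z i : ℕ) : ℤ) = digit m z i :=
  Int.toNat_of_nonneg (digit_nonneg (Nat.pos_of_neZero m) z i)

theorem toDigits_eq_pred_iff (z : ℤ) (i : ℕ) :
    (toDigits m z i : ℕ) = m - 1 ↔ digit m z i = m - 1 := by
  have := Nat.pos_of_neZero m
  have := toDigits_val (m := m) z i
  omega

theorem f1_toDigits (z : ℤ) : f1 m (toDigits m z) = toDigits m (z + 1) := by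
  funext i
  rw [Fin.ext_iff, ← Int.natCast_inj, f1_val, toDigits_val, digit_add_one (Nat.pos_of_neZero m)]
  simp only [pow_dvd_add_one_iff (Nat.pos_of_neZero m), toDigits_eq_pred_iff]
  split_ifs <;> push_cast [toDigits_val] <;> rfl

theorem f0_toDigits (hm : 1 < m) (z : ℤ) :
    f0 m (toDigits m z) = toDigits m (m * dropDigit m (z + 1)) := by
  funext i
  rw [Fin.ext_iff, ← Int.natCast_inj, f0_val, toDigits_val, digit_mul_dropDigit hm,
    digit_add_one (Nat.pos_of_neZero m)]
  simp only [pow_dvd_add_one_iff (Nat.pos_of_neZero m), toDigits_eq_pred_iff]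
  split_ifs <;> push_cast [toDigits_val]; rfl

theorem toDigits_injective (hm : 1 < m) : Function.Injective (toDigits m) :=
  fun z z' h => eq_of_digit_eq hm fun i => by rw [← toDigits_val, ← toDigits_val, h]

theorem exists_toDigits_eq (u : ℕ → Fin m) (i : ℕ) : ∃ z, ∀ k ≤ i, toDigits m z k = u k := by
  obtain ⟨z, hz⟩ := exists_digit_eq u i
  exact ⟨z, fun k hk => Fin.ext (by rw [← Int.natCast_inj, toDigits_val, hz k hk])⟩

end toDigits

section Word

variable {α β : Type*}

def word (g : Bool → α → α) (bs : List Bool) : α → α := (bs.map g).foldr (· ∘ ·) id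

@[simp] theorem word_nil (g : Bool → α → α) : word g [] = id := rfl

@[simp] theorem word_cons (g : Bool → α → α) (b : Bool) (bs : List Bool) :
    word g (b :: bs) = g b ∘ word g bs := rfl

theorem word_append (g : Bool → α → α) (bs bs' : List Bool) :
    word g (bs ++ bs') = word g bs ∘ word g bs' := by
  induction bs with
  | nil => rfl
  | cons b bs ih => simp [ih, Function.comp_assoc]

theorem semiconj_word {φ : α → β} {g : Bool → α → α} {g' : Bool → β → β}
    (h : ∀ b, Function.Semiconj φ (g b) (g' b)) (bs : List Bool) :
    Function.Semiconj φ (word g bs) (word g' bs) := by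
  induction bs with
  | nil => exact .id_right
  | cons b bs ih => exact (h b).comp_right ih

def IsCausal (F : (ℕ → α) → ℕ → β) : Prop :=
  ∀ u v i, (∀ k ≤ i, u k = v k) → F u i = F v i

theorem IsCausal.comp {F G : (ℕ → α) → ℕ → α} (hF : IsCausal F) (hG : IsCausal G) :
    IsCausal (F ∘ G) :=
  fun u v i h => hF _ _ i fun k hk => hG u v k fun l hl => h l (hl.trans hk)

theorem isCausal_word {g : Bool → (ℕ → α) → ℕ → α} (h : ∀ b, IsCausal (g b)) (bs : List Bool) :
    IsCausal (word g bs) := by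
  induction bs with
  | nil => exact fun u v i h => h i le_rfl
  | cons b bs ih => exact (h b).comp ih

theorem IsCausal.ext {F G : (ℕ → α) → ℕ → β} (hF : IsCausal F) (hG : IsCausal G)
    {D : Set (ℕ → α)} (hD : ∀ (u : ℕ → α) i, ∃ v ∈ D, ∀ k ≤ i, v k = u k)
    (h : Set.EqOn F G D) : F = G := by
  funext u i
  obtain ⟨v, hv, hvu⟩ := hD u i
  rw [hF u v i fun k hk => (hvu k hk).symm, hG u v i fun k hk => (hvu k hk).symm, h hv]

end Word

theorem carry_congr {u v : ℕ → Fin m} {i : ℕ} (h : ∀ k ≤ i, u k = v k) :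
    (∀ k < i, (u k : ℕ) = m - 1) ↔ (∀ k < i, (v k : ℕ) = m - 1) :=
  forall₂_congr fun k hk => by rw [h k hk.le]

theorem isCausal_f1 : IsCausal (f1 m) := fun u v i h => by
  rw [Fin.ext_iff, f1_val, f1_val, h i le_rfl]
  simp only [carry_congr h]

theorem isCausal_f0 : IsCausal (f0 m) := fun u v i h => by
  rw [Fin.ext_iff, f0_val, f0_val, h i le_rfl]
  simp only [carry_congr h]

noncomputable def seqGen (m : ℕ) : Bool → (ℕ → Fin m) → ℕ → Fin m
  | true => f1 m
  | false => f0 m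

def intGen (m : ℕ) : Bool → ℤ → ℤ
  | true => fun z => z + 1
  | false => fun z => m * dropDigit m (z + 1)

theorem isCausal_seqGen (b : Bool) : IsCausal (seqGen m b) := by
  cases b
  exacts [isCausal_f0, isCausal_f1]

theorem semiconj_toDigits [NeZero m] (hm : 1 < m) (b : Bool) :
    Function.Semiconj (toDigits m) (intGen m b) (seqGen m b) := fun z => by
  cases b
  exacts [(f0_toDigits hm z).symm, (f1_toDigits z).symm]

theorem word_seqGen_eq_iff (hm : 1 < m) {bs bs' : List Bool} :
    word (seqGen m) bs = word (seqGen m) bs' ↔ word (intGen m) bs = word (intGen m) bs' := by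
  have : NeZero m := ⟨by omega⟩
  have hconj := semiconj_word (semiconj_toDigits hm)
  constructor
  · intro h
    funext z
    apply toDigits_injective hm
    rw [hconj bs z, hconj bs' z, h]
  · intro h
    refine (isCausal_word isCausal_seqGen bs).ext (isCausal_word isCausal_seqGen bs')
      (D := Set.range (toDigits m)) (fun u i => ?_) ?_
    · obtain ⟨z, hz⟩ := exists_toDigits_eq u i
      exact ⟨_, ⟨z, rfl⟩, hz⟩
    · rintro _ ⟨z, rfl⟩
      rw [← hconj bs z, ← hconj bs' z, h]

open Filter

theorem tendsto_pow_sub_atTop (hm : 1 < m) (k : ℕ) :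
    Tendsto (fun N => (m : ℤ) ^ (N - k)) atTop atTop :=
  (tendsto_pow_atTop_atTop_of_one_lt (by exact_mod_cast hm)).comp (tendsto_sub_atTop_nat k)

theorem eventually_dropDigit_add_pow (hm : 1 < m) {s : ℤ} (hs : 0 < s) :
    ∀ᶠ N in atTop, dropDigit m (s + (m : ℤ) ^ N) = dropDigit m s + (m : ℤ) ^ (N - 1) := by
  filter_upwards [(tendsto_pow_sub_atTop hm 0).eventually_gt_atTop s, eventually_ge_atTop 1]
    with N hsN hN
  obtain ⟨N, rfl⟩ : ∃ k, N = k + 1 := ⟨N - 1, by omega⟩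
  have hndvd : ¬ (m : ℤ) ^ (N + 1) ∣ s := fun h => by
    have := Int.le_of_dvd hs h
    simp only [Nat.sub_zero] at hsN
    omega
  simpa using dropDigit_add_pow_mul hm hndvd 1

def tailEval (m : ℕ) (L : List ℕ) (x : ℤ) : ℤ := L.foldl (fun x c => dropDigit m (x + c + 1)) x

theorem tailEval_cons (c : ℕ) (L : List ℕ) (x : ℤ) :
    tailEval m (c :: L) x = tailEval m L (dropDigit m (x + c + 1)) := rfl

theorem tailEval_concat (L : List ℕ) (c : ℕ) (x : ℤ) :
    tailEval m (L ++ [c]) x = dropDigit m (tailEval m L x + c + 1) := by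
  simp [tailEval]

theorem tailEval_surjective (hm : 1 < m) (L : List ℕ) : Function.Surjective (tailEval m L) := by
  induction L with
  | nil => exact Function.surjective_id
  | cons c L ih =>
    intro t
    obtain ⟨x, rfl⟩ := ih t
    exact ⟨m * x - c, by rw [tailEval_cons, sub_add_cancel, dropDigit_mul_add_one hm]⟩

theorem eventually_tailEval_add_pow (hm : 1 < m) (L : List ℕ) {x : ℤ} (hx : 0 ≤ x) :
    ∀ᶠ N in atTop, tailEval m L (x + (m : ℤ) ^ N) = tailEval m L x + (m : ℤ) ^ (N - L.length) := by
  induction L generalizing x with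
  | nil => simp [tailEval]
  | cons c L ih =>
    have hs : 0 < x + c + 1 := by positivity
    filter_upwards [eventually_dropDigit_add_pow hm hs,
      (tendsto_sub_atTop_nat 1).eventually (ih (dropDigit_nonneg_and_mul_lt hm hs).1)] with N h1 h2
    rw [tailEval_cons, tailEval_cons, add_right_comm x, add_right_comm _ _ (1 : ℤ), h1, h2,
      List.length_cons, Nat.sub_sub, add_comm 1]

theorem not_forall_tailEval_cons_eq_add (hm : 1 < m) {c c' : ℕ} (hc : c < c') (L L' : List ℕ)
    (δ : ℤ) : ¬ ∀ x, tailEval m (c :: L) x = δ + tailEval m (c' :: L') x := by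
  intro h
  have hs : (0 : ℤ) < c' - c := by omega
  have hy := (dropDigit_nonneg_and_mul_lt hm hs).1
  -- at `x = m ^ N - (c + 1)` the left side is constant while the right side grows with `N`
  obtain ⟨N, hN, hdrop, hgrow, hbig⟩ := (eventually_ge_atTop 1 |>.and <|
    eventually_dropDigit_add_pow hm hs |>.and <|
    (tendsto_sub_atTop_nat 1).eventually (eventually_tailEval_add_pow hm L' hy) |>.and <|
    (tendsto_pow_sub_atTop hm (1 + L'.length)).eventually_gt_atTop
      (tailEval m L 0 - δ - tailEval m L' (dropDigit m (c' - c)))).exists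
  have hx := h ((m : ℤ) ^ N - (c + 1))
  rw [tailEval_cons, tailEval_cons, show (m : ℤ) ^ N - (c + 1) + c + 1 = (m : ℤ) ^ N by ring,
    show (m : ℤ) ^ N - (c + 1) + c' + 1 = (c' - c) + (m : ℤ) ^ N by ring, dropDigit_pow hm, hdrop,
    hgrow, Nat.sub_sub] at hx
  linarith

theorem eq_of_forall_tailEval_eq_add (hm : 1 < m) {L L' : List ℕ} (hlen : L.length = L'.length)
    {δ : ℤ} (h : ∀ x, tailEval m L x = δ + tailEval m L' x) : L = L' ∧ δ = 0 := by
  induction L generalizing L' with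
  | nil =>
    obtain rfl := List.eq_nil_of_length_eq_zero hlen.symm
    simpa [tailEval, eq_comm] using h 0
  | cons c L ih =>
    obtain ⟨c', L', rfl⟩ := List.exists_cons_of_length_eq_add_one hlen.symm
    obtain rfl : c = c' := by
      rcases lt_trichotomy c c' with hc | hc | hc
      · exact absurd h (not_forall_tailEval_cons_eq_add hm hc L L' δ)
      · exact hc
      · exact absurd (fun x => by linarith [h x]) (not_forall_tailEval_cons_eq_add hm hc L' L (-δ))
    have h' : ∀ y, tailEval m L y = δ + tailEval m L' y := fun y => by
      simpa [tailEval_cons, dropDigit_mul_add_one hm] using h (m * y - c)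
    exact (ih (by simpa using hlen) h').imp_left (congrArg (c :: ·))

-- The normal form `(b, [c₁, …, c_k])` is the word `f₁^b f₀ f₁^(m^(k-1) (c_k + 1) - 1) ⋯ f₀ f₁^c₁`,
-- acting on `ℤ`; its length is `nfLength m (b, [c₁, …, c_k]) = b + ∑ (cᵢ + 1) m^(i-1)`.
def nfEval (m : ℕ) (d : ℕ × List ℕ) (x : ℤ) : ℤ := d.1 + (m : ℤ) ^ d.2.length * tailEval m d.2 x

def tailLength (m : ℕ) (L : List ℕ) : ℕ := L.foldr (fun c n => c + 1 + m * n) 0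

def nfLength (m : ℕ) (d : ℕ × List ℕ) : ℕ := d.1 + tailLength m d.2

theorem pow_length_dvd_of_nfEval_eq (hm : 1 < m) {d d' : ℕ × List ℕ}
    (h : nfEval m d = nfEval m d') : m ^ d'.2.length ∣ m ^ d.2.length := by
  obtain ⟨x₀, hx₀⟩ := tailEval_surjective hm d.2 0
  obtain ⟨x₁, hx₁⟩ := tailEval_surjective hm d.2 1
  have h₀ := congrFun h x₀
  have h₁ := congrFun h x₁
  simp only [nfEval, hx₀, hx₁] at h₀ h₁
  rw [← Int.natCast_dvd_natCast]
  push_cast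
  exact ⟨tailEval m d'.2 x₁ - tailEval m d'.2 x₀, by linear_combination h₁ - h₀⟩

theorem nfEval_injective (hm : 1 < m) : Function.Injective (nfEval m) := by
  rintro ⟨b, L⟩ ⟨b', L'⟩ h
  have hlen : L.length = L'.length := le_antisymm
    ((Nat.pow_dvd_pow_iff_le_right hm).mp (pow_length_dvd_of_nfEval_eq hm h.symm))
    ((Nat.pow_dvd_pow_iff_le_right hm).mp (pow_length_dvd_of_nfEval_eq hm h))
  obtain ⟨x₀, hx₀⟩ := tailEval_surjective hm L 0
  have hb := congrFun h x₀
  simp only [nfEval, hx₀, hlen, mul_zero, add_zero] at hb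
  have hpow : (m : ℤ) ^ L'.length ≠ 0 := by positivity
  have h' : ∀ x, tailEval m L' x = tailEval m L' x₀ + tailEval m L x := fun x => by
    have hx := congrFun h x
    simp only [nfEval, hlen] at hx
    exact mul_left_cancel₀ hpow (by linear_combination hb - hx)
  obtain ⟨rfl, hδ⟩ := eq_of_forall_tailEval_eq_add hm hlen.symm h'
  simp only [hδ, mul_zero, add_zero, Nat.cast_inj] at hb
  rw [hb]

theorem tailLength_concat (L : List ℕ) (c : ℕ) :
    tailLength m (L ++ [c]) = tailLength m L + m ^ L.length * (c + 1) := by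
  induction L with
  | nil => simp [tailLength]
  | cons a L ih =>
    simp only [tailLength, List.cons_append, List.foldr_cons, List.length_cons] at ih ⊢
    rw [ih]
    ring

theorem intGen_false_comp_nfEval_of_dvd (hm : 1 < m) {b t : ℕ} {L : List ℕ}
    (hb : b + 1 = m ^ L.length * (t + 1)) :
    intGen m false ∘ nfEval m (b, L) = nfEval m (0, L ++ [t]) := by
  funext x
  have hb' : (b : ℤ) + (m : ℤ) ^ L.length * tailEval m L x + 1
      = (m : ℤ) ^ L.length * (tailEval m L x + t + 1) := by
    have : ((b + 1 : ℕ) : ℤ) = ((m ^ L.length * (t + 1) : ℕ) : ℤ) := congrArg _ hb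
    push_cast at this
    linear_combination this
  simp only [Function.comp, intGen, nfEval]
  rw [hb', dropDigit_pow_mul hm, tailEval_concat, List.length_append, List.length_singleton]
  push_cast
  ring

theorem intGen_false_comp_nfEval_of_not_dvd (hm : 1 < m) {b : ℕ} {L : List ℕ}
    (hb : ¬ m ^ L.length ∣ b + 1) :
    ∃ b' ≤ b, intGen m false ∘ nfEval m (b, L) = nfEval m (b', L) := by
  obtain ⟨k, hk⟩ : ∃ k, L.length = k + 1 :=
    Nat.exists_eq_add_one.mpr (Nat.pos_of_ne_zero fun h => hb (by simp [h]))
  have hb' : ¬ (m : ℤ) ^ (k + 1) ∣ (b : ℤ) + 1 := by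
    rw [← hk]
    exact_mod_cast hb
  obtain ⟨h0, hlt⟩ := dropDigit_nonneg_and_mul_lt hm (show (0 : ℤ) < b + 1 by positivity)
  refine ⟨(m * dropDigit m (b + 1)).toNat, by omega, funext fun x => ?_⟩
  simp only [Function.comp, intGen, nfEval, hk]
  rw [add_right_comm, dropDigit_add_pow_mul hm hb', Int.toNat_of_nonneg (by positivity)]
  ring

theorem exists_nfEval_eq (hm : 1 < m) (bs : List Bool) :
    ∃ d, word (intGen m) bs = nfEval m d ∧ nfLength m d ≤ bs.length := by
  induction bs with
  | nil => exact ⟨(0, []), by funext x; simp [nfEval, tailEval], by simp [nfLength, tailLength]⟩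
  | cons b bs ih =>
    obtain ⟨⟨b₀, L⟩, hw, hlen⟩ := ih
    simp only [nfLength] at hlen
    rw [word_cons, hw, List.length_cons]
    cases b with
    | false =>
      by_cases hd : m ^ L.length ∣ b₀ + 1
      · obtain ⟨q, hq⟩ := hd
        obtain ⟨t, rfl⟩ : ∃ t, q = t + 1 := Nat.exists_eq_add_one.mpr (Nat.pos_of_ne_zero
          (by rintro rfl; simp at hq))
        refine ⟨(0, L ++ [t]), intGen_false_comp_nfEval_of_dvd hm hq, ?_⟩
        simp only [nfLength, tailLength_concat, ← hq]
        omega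
      · obtain ⟨b', hb', h⟩ := intGen_false_comp_nfEval_of_not_dvd hm hd
        exact ⟨(b', L), h, by simp only [nfLength]; omega⟩
    | true =>
      refine ⟨(b₀ + 1, L), ?_, by simp only [nfLength]; omega⟩
      funext x
      simp only [Function.comp, intGen, nfEval]
      push_cast
      ring

theorem word_intGen_replicate_true (n : ℕ) :
    word (intGen m) (List.replicate n true) = fun x : ℤ => x + n := by
  induction n with
  | zero => funext x; simp
  | succ n ih =>
    funext x
    simp only [List.replicate_succ, word_cons, ih, Function.comp, intGen]
    push_cast
    ring

theorem exists_word_eq_nfEval (hm : 1 < m) (d : ℕ × List ℕ) :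
    ∃ bs, word (intGen m) bs = nfEval m d ∧ bs.length = nfLength m d := by
  obtain ⟨b, L⟩ := d
  induction L using List.reverseRecOn generalizing b with
  | nil =>
    refine ⟨List.replicate b true, ?_, by simp [nfLength, tailLength]⟩
    rw [word_intGen_replicate_true]
    funext x
    simp [nfEval, tailEval, add_comm]
  | append_singleton L t ih =>
    have hpos : 0 < m ^ L.length * (t + 1) := by positivity
    obtain ⟨bs, hw, hlen⟩ := ih (m ^ L.length * (t + 1) - 1)
    refine ⟨List.replicate b true ++ false :: bs, ?_, ?_⟩
    · rw [word_append, word_cons, hw,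
        intGen_false_comp_nfEval_of_dvd hm (t := t) (by omega), word_intGen_replicate_true]
      funext x
      simp only [Function.comp, nfEval]
      push_cast
      ring
    · simp only [nfLength, tailLength_concat, List.length_append, List.length_replicate,
        List.length_cons] at hlen ⊢
      omega

def nfSet (m n : ℕ) : Set (ℕ × List ℕ) := {d | nfLength m d = n}

theorem tailLength_cons (c : ℕ) (L : List ℕ) :
    tailLength m (c :: L) = c + 1 + m * tailLength m L := rfl

theorem nfSet_zero : nfSet m 0 = {(0, [])} := by
  ext ⟨b, _ | ⟨c, L⟩⟩ <;> simp [nfSet, nfLength, tailLength]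

theorem nfSet_succ (hm : 0 < m) (n : ℕ) :
    nfSet m (n + 1) = (fun d => (d.1 + 1, d.2)) '' nfSet m n ∪
      (fun d => (0, (m * d.1 + n % m) :: d.2)) '' nfSet m (n / m) := by
  have hn := Nat.div_add_mod n m
  ext ⟨b, L⟩
  simp only [nfSet, nfLength, Set.mem_union, Set.mem_image, Set.mem_ofPred_eq, Prod.mk.injEq,
    Prod.exists]
  constructor
  · intro h
    cases b with
    | succ b => exact .inl ⟨b, L, by omega, rfl, rfl⟩
    | zero =>
      obtain _ | ⟨c, L⟩ := L
      · simp [tailLength] at h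
      rw [tailLength_cons] at h
      have hg : m * tailLength m L ≤ m * (n / m) :=
        Nat.mul_le_mul_left m ((Nat.le_div_iff_mul_le hm).mpr (by rw [mul_comm]; omega))
      refine .inr ⟨n / m - tailLength m L, L, ?_, rfl, congrArg (· :: L) ?_⟩
      · exact Nat.sub_add_cancel (Nat.le_of_mul_le_mul_left hg hm)
      · rw [Nat.mul_sub]
        omega
  · rintro (⟨b, L, h, rfl, rfl⟩ | ⟨b, L, h, rfl, rfl⟩)
    · omega
    · rw [← h, mul_add] at hn
      rw [tailLength_cons]
      omega

theorem nfSet_finite (hm : 0 < m) (n : ℕ) : (nfSet m n).Finite := by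
  induction n using Nat.strong_induction_on with
  | _ n ih =>
    cases n with
    | zero => simp [nfSet_zero]
    | succ n =>
      rw [nfSet_succ hm]
      exact ((ih n n.lt_succ_self).image _).union
        ((ih (n / m) (Nat.lt_succ_of_le (Nat.div_le_self n m))).image _)

theorem ncard_nfSet_succ (hm : 0 < m) (n : ℕ) :
    (nfSet m (n + 1)).ncard = (nfSet m n).ncard + (nfSet m (n / m)).ncard := by
  have hdisj : Disjoint ((fun d => (d.1 + 1, d.2)) '' nfSet m n)
      ((fun d => (0, (m * d.1 + n % m) :: d.2)) '' nfSet m (n / m)) := by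
    rw [Set.disjoint_left]
    rintro _ ⟨d, -, rfl⟩ ⟨d', -, h⟩
    simp at h
  rw [nfSet_succ hm, Set.ncard_union_eq hdisj ((nfSet_finite hm n).image _)
    ((nfSet_finite hm _).image _), Set.ncard_image_of_injective, Set.ncard_image_of_injective]
  · rintro ⟨b, L⟩ ⟨b', L'⟩ h
    simp only [Prod.mk.injEq, List.cons.injEq, add_left_inj, true_and] at h
    rw [Nat.eq_of_mul_eq_mul_left hm h.1, h.2]
  · rintro ⟨b, L⟩ ⟨b', L'⟩ h
    simpa using h

theorem forall_mem_seqGen (bs : List Bool) :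
    ∀ g ∈ bs.map (seqGen m), g = f0 m ∨ g = f1 m := by
  simp only [List.mem_map]
  rintro _ ⟨(_ | _), -, rfl⟩
  exacts [.inl rfl, .inr rfl]

theorem exists_map_seqGen_eq {L : List ((ℕ → Fin m) → ℕ → Fin m)}
    (hL : ∀ g ∈ L, g = f0 m ∨ g = f1 m) : ∃ bs : List Bool, bs.map (seqGen m) = L := by
  induction L with
  | nil => exact ⟨[], rfl⟩
  | cons g L ih =>
    obtain ⟨bs, rfl⟩ := ih fun g' hg' => hL g' (List.mem_cons_of_mem _ hg')
    rcases hL g List.mem_cons_self with rfl | rfl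
    exacts [⟨false :: bs, rfl⟩, ⟨true :: bs, rfl⟩]

theorem mem_SM_iff {s : (ℕ → Fin m) → ℕ → Fin m} :
    s ∈ SM m ↔ ∃ bs : List Bool, word (seqGen m) bs = s := by
  constructor
  · rintro ⟨L, hL, rfl⟩
    obtain ⟨bs, rfl⟩ := exists_map_seqGen_eq hL
    exact ⟨bs, rfl⟩
  · rintro ⟨bs, rfl⟩
    exact ⟨_, forall_mem_seqGen bs, rfl⟩

theorem wordLength_eq_of {s : (ℕ → Fin m) → ℕ → Fin m} {n : ℕ}
    (hex : ∃ bs : List Bool, bs.length = n ∧ word (seqGen m) bs = s)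
    (hle : ∀ bs : List Bool, word (seqGen m) bs = s → n ≤ bs.length) : wordLength m s = n := by
  obtain ⟨bs, hlen, hs⟩ := hex
  have hmem : n ∈ {n | ∃ L : List ((ℕ → Fin m) → ℕ → Fin m),
      L.length = n ∧ (∀ g ∈ L, g = f0 m ∨ g = f1 m) ∧ L.foldr (· ∘ ·) id = s} :=
    ⟨bs.map (seqGen m), by rw [List.length_map, hlen], forall_mem_seqGen bs, hs⟩
  refine le_antisymm (Nat.sInf_le hmem) (le_csInf ⟨n, hmem⟩ ?_)
  rintro k ⟨L, rfl, hL, hs'⟩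
  obtain ⟨bs', rfl⟩ := exists_map_seqGen_eq hL
  simpa using hle bs' hs'

theorem wordLength_word_seqGen (hm : 1 < m) {bs : List Bool} {d : ℕ × List ℕ}
    (h : word (intGen m) bs = nfEval m d) : wordLength m (word (seqGen m) bs) = nfLength m d := by
  obtain ⟨bs₀, hw₀, hlen₀⟩ := exists_word_eq_nfEval hm d
  refine wordLength_eq_of ⟨bs₀, hlen₀, (word_seqGen_eq_iff hm).mpr (hw₀.trans h.symm)⟩ ?_
  intro bs' hbs'
  obtain ⟨d', hd', hle⟩ := exists_nfEval_eq hm bs'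
  obtain rfl : d' = d := nfEval_injective hm (by rw [← hd', ← h, ← word_seqGen_eq_iff hm, hbs'])
  exact hle

theorem gammaW_eq_ncard_nfSet (hm : 1 < m) (n : ℕ) : gammaW m n = (nfSet m n).ncard := by
  choose w hw _ using exists_word_eq_nfEval hm
  have hinj : Function.Injective fun d => word (seqGen m) (w d) := fun d d' h =>
    nfEval_injective hm (by rw [← hw, ← hw, ← word_seqGen_eq_iff hm]; exact h)
  have himage :
      {s | s ∈ SM m ∧ wordLength m s = n} = (fun d => word (seqGen m) (w d)) '' nfSet m n := by
    ext s
    constructor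
    · rintro ⟨hs, rfl⟩
      obtain ⟨bs, rfl⟩ := mem_SM_iff.mp hs
      obtain ⟨d, hd, -⟩ := exists_nfEval_eq hm bs
      exact ⟨d, (wordLength_word_seqGen hm hd).symm, (word_seqGen_eq_iff hm).mpr (by rw [hw, hd])⟩
    · rintro ⟨d, hd, rfl⟩
      exact ⟨mem_SM_iff.mpr ⟨_, rfl⟩, (wordLength_word_seqGen hm (hw d)).trans hd⟩
  rw [gammaW, himage, Set.ncard_image_of_injective _ hinj]

end Odometer

open Odometer in
/-- The word growth function satisfies `γ_m(n+1) = γ_m(n) + γ_m(⌊n/m⌋)`. -/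
theorem gamma_functional_equation (m : ℕ) (hm : 2 ≤ m) (n : ℕ) :
    gammaW m (n + 1) = gammaW m n + gammaW m (n / m) := by
  rw [gammaW_eq_ncard_nfSet hm, gammaW_eq_ncard_nfSet hm, gammaW_eq_ncard_nfSet hm]
  exact ncard_nfSet_succ (by omega) n
end

section
/- The sequence of growth functions (Γ_m) tends pointwise to the function n ↦ (n+1)(n+2)/2 as m → ∞: for every n ∈ ℕ there exists M ∈ ℕ such that for all m ≥ M, Γ_m(n) = (n+1)(n+2)/2. -/
/- For `m ≥ n + 3` every word of length `≤ n` in `f₀, f₁` can be shortened, using the relation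
`f₀ ∘ f₁^k ∘ f₀ = f₀` (`k ≤ m - 2`), to a normal form `f₁^a` or `f₁^a ∘ f₀ ∘ f₁^e` of no greater
length. Normal forms of length `≤ m - 3` are pairwise distinct, as their values on a few words
with two nonzero digits show, so `Γ_m(n)` counts the pairs `(a, c)` with `a + c ≤ n`. -/

section Digits

variable {m : ℕ}

theorem f1_val_of_first_ne (u : ℕ → Fin m) {j : ℕ} (hj : (u j : ℕ) ≠ m - 1)
    (hlt : ∀ i < j, (u i : ℕ) = m - 1) (i : ℕ) :
    (f1 m u i : ℕ) = if i < j then 0 else if i = j then (u j : ℕ) + 1 else u i := by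
  have h : ∃ j, (u j : ℕ) ≠ m - 1 := ⟨j, hj⟩
  have hfind : Nat.find h = j := (Nat.find_eq_iff h).2 ⟨hj, fun i hi => not_not.2 (hlt i hi)⟩
  simp only [f1, dif_pos h, hfind]
  split_ifs <;> simp_all

theorem f0_val_of_first_ne (u : ℕ → Fin m) {j : ℕ} (hj : (u j : ℕ) ≠ m - 1)
    (hlt : ∀ i < j, (u i : ℕ) = m - 1) (i : ℕ) :
    (f0 m u i : ℕ) = if i ≤ j then 0 else (u i : ℕ) := by
  have h : ∃ j, (u j : ℕ) ≠ m - 1 := ⟨j, hj⟩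
  have hfind : Nat.find h = j := (Nat.find_eq_iff h).2 ⟨hj, fun i hi => not_not.2 (hlt i hi)⟩
  simp only [f0, dif_pos h, hfind]
  split_ifs <;> rfl

theorem f0_val_zero (u : ℕ → Fin m) : (f0 m u 0 : ℕ) = 0 := by
  unfold f0
  split_ifs <;> rfl

theorem iterate_f1_val (u : ℕ → Fin m) {k : ℕ} (hk : (u 0 : ℕ) + k < m) (i : ℕ) :
    ((f1 m)^[k] u i : ℕ) = if i = 0 then (u 0 : ℕ) + k else u i := by
  induction k generalizing i with
  | zero => split_ifs with hi <;> simp [hi]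
  | succ k ih =>
    have hhead : ((f1 m)^[k] u 0 : ℕ) ≠ m - 1 := by rw [ih (by omega)]; simp; omega
    rw [Function.iterate_succ_apply', f1_val_of_first_ne _ hhead (by simp), ih (by omega),
      ih (by omega)]
    split_ifs <;> simp_all; omega

-- After `f₀` the first digit is `0`; `f₁^k` raises it to `k ≠ m - 1`, which `f₀` erases again.
theorem f0_comp_iterate_f1_comp_f0 {k : ℕ} (hk : k + 2 ≤ m) :
    f0 m ∘ (f1 m)^[k] ∘ f0 m = f0 m := by
  funext u i
  have hhead : ((f1 m)^[k] (f0 m u) 0 : ℕ) ≠ m - 1 := by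
    rw [iterate_f1_val _ (by rw [f0_val_zero]; omega)]; simp [f0_val_zero]; omega
  apply Fin.ext
  rw [Function.comp_apply, Function.comp_apply, f0_val_of_first_ne _ hhead (by simp),
    iterate_f1_val _ (by rw [f0_val_zero]; omega)]
  split_ifs with hi hi'
  · rw [Nat.le_zero.1 hi, f0_val_zero]
  · omega
  · rfl

end Digits

noncomputable def normalForm (m : ℕ) : ℕ × ℕ → (ℕ → Fin m) → ℕ → Fin m
  | (a, 0) => (f1 m)^[a]
  | (a, e + 1) => (f1 m)^[a] ∘ f0 m ∘ (f1 m)^[e]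

section NormalForm

variable {m : ℕ}

theorem foldr_comp_replicate {α : Type*} (f g : α → α) (k : ℕ) :
    (List.replicate k f).foldr (· ∘ ·) g = f^[k] ∘ g := by
  induction k with
  | zero => rfl
  | succ k ih =>
    rw [List.replicate_succ, List.foldr_cons, ih, Function.iterate_succ', Function.comp_assoc]

theorem exists_list_foldr_eq_normalForm (p : ℕ × ℕ) :
    ∃ L : List ((ℕ → Fin m) → ℕ → Fin m), L.length = p.1 + p.2 ∧
      (∀ g ∈ L, g = f0 m ∨ g = f1 m) ∧ L.foldr (· ∘ ·) id = normalForm m p := by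
  obtain ⟨a, _ | e⟩ := p
  · refine ⟨List.replicate a (f1 m), by simp, fun g hg => .inr (List.eq_of_mem_replicate hg), ?_⟩
    rw [foldr_comp_replicate, Function.comp_id]
    rfl
  · refine ⟨List.replicate a (f1 m) ++ f0 m :: List.replicate e (f1 m), by simp,
      fun g hg => ?_, ?_⟩
    · simp only [List.mem_append, List.mem_cons] at hg
      rcases hg with hg | rfl | hg
      exacts [.inr (List.eq_of_mem_replicate hg), .inl rfl, .inr (List.eq_of_mem_replicate hg)]
    · rw [List.foldr_append, List.foldr_cons, foldr_comp_replicate, foldr_comp_replicate,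
        Function.comp_id]
      rfl

theorem f1_comp_normalForm (a c : ℕ) : f1 m ∘ normalForm m (a, c) = normalForm m (a + 1, c) := by
  rcases c with _ | e
  · exact (Function.iterate_succ' _ _).symm
  · simp only [normalForm, Function.iterate_succ', Function.comp_assoc]

theorem f0_comp_normalForm {a c : ℕ} (ha : a + 2 ≤ m) :
    f0 m ∘ normalForm m (a, c) = normalForm m (0, if c = 0 then a + 1 else c) := by
  rcases c with _ | e
  · rfl
  · change f0 m ∘ (f1 m)^[a] ∘ f0 m ∘ (f1 m)^[e] = f0 m ∘ (f1 m)^[e]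
    rw [← Function.comp_assoc, ← Function.comp_assoc, Function.comp_assoc (f0 m),
      f0_comp_iterate_f1_comp_f0 ha]

theorem exists_foldr_eq_normalForm (L : List ((ℕ → Fin m) → ℕ → Fin m))
    (hL : ∀ g ∈ L, g = f0 m ∨ g = f1 m) (hlen : L.length + 2 ≤ m) :
    ∃ p : ℕ × ℕ, p.1 + p.2 ≤ L.length ∧ L.foldr (· ∘ ·) id = normalForm m p := by
  induction L with
  | nil => exact ⟨(0, 0), le_rfl, rfl⟩
  | cons g L ih =>
    simp only [List.mem_cons, forall_eq_or_imp, List.length_cons] at hL hlen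
    obtain ⟨⟨a, c⟩, hac, hfold⟩ := ih hL.2 (by omega)
    rw [List.foldr_cons, hfold, List.length_cons]
    rcases hL.1 with rfl | rfl
    · refine ⟨_, ?_, f0_comp_normalForm (by omega)⟩
      split_ifs <;> simp only at hac ⊢ <;> omega
    · exact ⟨_, by simp only at hac ⊢; omega, f1_comp_normalForm a c⟩

end NormalForm

def twoDigits (m : ℕ) [NeZero m] (x y : ℕ) : ℕ → Fin m :=
  fun i => if i = 0 then Fin.ofNat m x else if i = 1 then Fin.ofNat m y else 0

section TwoDigits

variable {m : ℕ} [NeZero m]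

theorem twoDigits_val {x y : ℕ} (hx : x < m) (hy : y < m) (i : ℕ) :
    (twoDigits m x y i : ℕ) = if i = 0 then x else if i = 1 then y else 0 := by
  unfold twoDigits
  split_ifs <;> simp [Nat.mod_eq_of_lt, *]

theorem twoDigits_val_zero {x : ℕ} (y : ℕ) (hx : x < m) : (twoDigits m x y 0 : ℕ) = x := by
  simp [twoDigits, Nat.mod_eq_of_lt hx]

theorem twoDigits_val_one (x : ℕ) {y : ℕ} (hy : y < m) : (twoDigits m x y 1 : ℕ) = y := by
  simp [twoDigits, Nat.mod_eq_of_lt hy]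

theorem eq_twoDigits {u : ℕ → Fin m} {x y : ℕ} (hx : x < m) (hy : y < m)
    (hu : ∀ i, (u i : ℕ) = if i = 0 then x else if i = 1 then y else 0) :
    u = twoDigits m x y :=
  funext fun i => Fin.ext <| by rw [hu, twoDigits_val hx hy]

theorem iterate_f1_twoDigits {x y k : ℕ} (hk : x + k < m) (hy : y < m) :
    (f1 m)^[k] (twoDigits m x y) = twoDigits m (x + k) y := by
  refine eq_twoDigits hk hy fun i => ?_
  rw [iterate_f1_val _ (by rwa [twoDigits_val (by omega) hy])]
  simp only [twoDigits_val (by omega : x < m) hy]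
  split_ifs <;> rfl

theorem f1_twoDigits_last {y : ℕ} (hy : y + 1 < m) :
    f1 m (twoDigits m (m - 1) y) = twoDigits m 0 (y + 1) := by
  have hval := twoDigits_val (m := m) (x := m - 1) (by omega) (by omega : y < m)
  refine eq_twoDigits (by omega) hy fun i => ?_
  rw [f1_val_of_first_ne _ (j := 1) (by rw [twoDigits_val_one _ (by omega)]; omega)
    (by simp [hval]), twoDigits_val_one _ (by omega), hval]
  split_ifs <;> omega

theorem iterate_f1_twoDigits_of_le {x y k : ℕ} (hx : x < m) (hle : m ≤ x + k)
    (hk : x + k < 2 * m) (hy : y + 1 < m) :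
    (f1 m)^[k] (twoDigits m x y) = twoDigits m (x + k - m) (y + 1) := by
  obtain ⟨l, rfl⟩ : ∃ l, k = l + 1 + (m - 1 - x) := ⟨x + k - m, by omega⟩
  rw [Function.iterate_add_apply, iterate_f1_twoDigits (by omega) (by omega),
    show x + (m - 1 - x) = m - 1 by omega, Function.iterate_succ_apply, f1_twoDigits_last hy,
    iterate_f1_twoDigits (by omega) hy]
  congr 1
  omega

theorem f0_twoDigits {x y : ℕ} (hx : x + 1 < m) (hy : y < m) :
    f0 m (twoDigits m x y) = twoDigits m 0 y := by
  have hval := twoDigits_val hx.le hy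
  refine eq_twoDigits (by omega) hy fun i => ?_
  rw [f0_val_of_first_ne _ (j := 0) (by simp [hval]; omega) (by simp), hval]
  split_ifs <;> omega

theorem f0_twoDigits_last {y : ℕ} (hy : y + 1 < m) :
    f0 m (twoDigits m (m - 1) y) = twoDigits m 0 0 := by
  have hval := twoDigits_val (m := m) (x := m - 1) (by omega) (by omega : y < m)
  refine eq_twoDigits (by omega) (by omega) fun i => ?_
  rw [f0_val_of_first_ne _ (j := 1) (by rw [twoDigits_val_one _ (by omega)]; omega)
    (by simp [hval]), hval]
  split_ifs <;> omega

end TwoDigits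

section Separation

variable {m : ℕ} [NeZero m]

theorem normalForm_twoDigits_zero {p : ℕ × ℕ} (ha : p.1 < m) (hc : p.2 < m) :
    normalForm m p (twoDigits m 0 0) = twoDigits m p.1 0 := by
  have hm : 0 < m := NeZero.pos m
  obtain ⟨a, _ | e⟩ := p
  · change (f1 m)^[a] _ = twoDigits m a 0
    simpa using iterate_f1_twoDigits (x := 0) (y := 0) (by simpa using ha) hm
  · simp only at ha hc
    change (f1 m)^[a] (f0 m ((f1 m)^[e] _)) = twoDigits m a 0
    rw [iterate_f1_twoDigits (by omega) hm, f0_twoDigits (by omega) hm,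
      iterate_f1_twoDigits (by omega) hm, zero_add]

theorem iterate_f1_twoDigits_val_one_ne_zero {a b : ℕ} (hm : 3 ≤ m) (ha : a < m) (hb : b < m) :
    ((f1 m)^[a] (twoDigits m (m - 1 - b) 1) 1 : ℕ) ≠ 0 := by
  by_cases hab : a ≤ b
  · rw [iterate_f1_twoDigits (by omega) (by omega), twoDigits_val_one _ (by omega)]
    exact one_ne_zero
  · rw [iterate_f1_twoDigits_of_le (by omega) (by omega) (by omega) (by omega),
      twoDigits_val_one _ (by omega)]
    exact two_ne_zero

theorem f0_iterate_f1_twoDigits {b e : ℕ} (hm : 3 ≤ m) (he : e < m) (hb : b < m) :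
    f0 m ((f1 m)^[e] (twoDigits m (m - 1 - b) 1)) =
      twoDigits m 0 (if e < b then 1 else if e = b then 0 else 2) := by
  rcases lt_trichotomy e b with h | rfl | h
  · rw [iterate_f1_twoDigits (by omega) (by omega), f0_twoDigits (by omega) (by omega), if_pos h]
  · rw [iterate_f1_twoDigits (by omega) (by omega), show m - 1 - e + e = m - 1 by omega,
      f0_twoDigits_last (by omega), if_neg (lt_irrefl e), if_pos rfl]
  · rw [iterate_f1_twoDigits_of_le (by omega) (by omega) (by omega) (by omega),
      f0_twoDigits (by omega) (by omega), if_neg (by omega), if_neg (by omega)]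

/- The `f₀` in `f₁^a ∘ f₀ ∘ f₁^e` also clears the second digit exactly when `f₁^e` carries the
first digit from `m - 1 - b` to `m - 1`. -/
theorem normalForm_twoDigits_val_one_eq_zero_iff {p : ℕ × ℕ} {b : ℕ} (hm : 3 ≤ m)
    (ha : p.1 < m) (hc : p.2 < m) (hb : b < m) :
    (normalForm m p (twoDigits m (m - 1 - b) 1) 1 : ℕ) = 0 ↔ p.2 = b + 1 := by
  obtain ⟨a, _ | e⟩ := p
  · change ((f1 m)^[a] _ 1 : ℕ) = 0 ↔ 0 = b + 1
    simpa using iterate_f1_twoDigits_val_one_ne_zero hm ha hb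
  · simp only at ha hc
    change ((f1 m)^[a] (f0 m ((f1 m)^[e] _)) 1 : ℕ) = 0 ↔ e + 1 = b + 1
    rw [f0_iterate_f1_twoDigits hm (by omega) hb,
      iterate_f1_twoDigits (by omega) (by split_ifs <;> omega),
      twoDigits_val_one _ (by split_ifs <;> omega)]
    split_ifs <;> simp <;> omega

end Separation

theorem normalForm_injOn {m : ℕ} : Set.InjOn (normalForm m) {p | p.1 + p.2 + 3 ≤ m} := by
  rintro ⟨a, c⟩ (hp : a + c + 3 ≤ m) ⟨a', c'⟩ (hq : a' + c' + 3 ≤ m) h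
  have : NeZero m := ⟨by omega⟩
  have ha : a = a' := by
    have h0 := congrArg (fun s => (s (twoDigits m 0 0) 0 : ℕ)) h
    rwa [normalForm_twoDigits_zero (p := (a, c)) (by simp only; omega) (by simp only; omega),
      normalForm_twoDigits_zero (p := (a', c')) (by simp only; omega) (by simp only; omega),
      twoDigits_val_zero _ (by simp only; omega), twoDigits_val_zero _ (by simp only; omega)] at h0
  have hc : ∀ b < m, c = b + 1 ↔ c' = b + 1 := fun b hb => by
    rw [← normalForm_twoDigits_val_one_eq_zero_iff (p := (a, c)) (by omega) (by omega)
      (by omega) hb, ← normalForm_twoDigits_val_one_eq_zero_iff (p := (a', c')) (by omega)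
      (by omega) (by omega) hb, h]
  rw [ha, Prod.mk.injEq]
  refine ⟨rfl, ?_⟩
  rcases c with _ | b
  · rcases c' with _ | b'
    · rfl
    · exact absurd ((hc b' (by omega)).2 rfl) (by omega)
  · exact ((hc b (by omega)).1 rfl).symm

section Length

variable {m : ℕ}

theorem exists_list_length_eq_wordLength {s : (ℕ → Fin m) → ℕ → Fin m} (hs : s ∈ SM m) :
    ∃ L : List ((ℕ → Fin m) → ℕ → Fin m), L.length = wordLength m s ∧
      (∀ g ∈ L, g = f0 m ∨ g = f1 m) ∧ L.foldr (· ∘ ·) id = s := by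
  obtain ⟨L, hL, hfold⟩ := hs
  exact Nat.sInf_mem (s := {k | ∃ L : List ((ℕ → Fin m) → ℕ → Fin m), L.length = k ∧
    (∀ g ∈ L, g = f0 m ∨ g = f1 m) ∧ L.foldr (· ∘ ·) id = s}) ⟨L.length, L, rfl, hL, hfold⟩

theorem wordLength_foldr_le {L : List ((ℕ → Fin m) → ℕ → Fin m)}
    (hL : ∀ g ∈ L, g = f0 m ∨ g = f1 m) : wordLength m (L.foldr (· ∘ ·) id) ≤ L.length :=
  Nat.sInf_le ⟨L, rfl, hL, rfl⟩

theorem setOf_wordLength_le_eq_image {n : ℕ} (hn : n + 2 ≤ m) :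
    {s | s ∈ SM m ∧ wordLength m s ≤ n} = normalForm m '' {p | p.1 + p.2 ≤ n} := by
  ext s
  constructor
  · rintro ⟨hs, hlen⟩
    obtain ⟨L, hLlen, hL, rfl⟩ := exists_list_length_eq_wordLength hs
    obtain ⟨p, hp, hfold⟩ := exists_foldr_eq_normalForm L hL (by omega)
    exact ⟨p, (show p.1 + p.2 ≤ n by omega), hfold.symm⟩
  · rintro ⟨p, hp, rfl⟩
    obtain ⟨L, hlen, hL, hfold⟩ := exists_list_foldr_eq_normalForm (m := m) p
    exact ⟨⟨L, hL, hfold⟩, hfold ▸ (wordLength_foldr_le hL).trans (hlen ▸ hp)⟩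

end Length

open Finset.HasAntidiagonal in
theorem ncard_setOf_add_le (n : ℕ) :
    {p : ℕ × ℕ | p.1 + p.2 ≤ n}.ncard = (n + 1) * (n + 2) / 2 := by
  have hset : {p : ℕ × ℕ | p.1 + p.2 ≤ n} =
      ↑((Finset.range (n + 1)).biUnion antidiagonal) := by
    ext p
    simp
  have hdisj : (↑(Finset.range (n + 1)) : Set ℕ).PairwiseDisjoint antidiagonal :=
    fun i _ j _ hij => Finset.disjoint_left.2 fun p hi hj =>
      hij ((mem_antidiagonal.1 hi).symm.trans (mem_antidiagonal.1 hj))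
  rw [hset, Set.ncard_coe_finset, Finset.card_biUnion hdisj]
  calc ∑ k ∈ Finset.range (n + 1), (antidiagonal k).card
      = ∑ k ∈ Finset.range (n + 1), (k + 1) := by simp only [Finset.Nat.card_antidiagonal]
    _ = ∑ k ∈ Finset.range (n + 2), k := (Finset.sum_range_succ' (fun k => k) (n + 1)).symm
    _ = (n + 1) * (n + 2) / 2 := by rw [Finset.sum_range_id, mul_comm]; rfl

/-- The sequence of growth functions `(Γ_m)` tends pointwise to
`n ↦ (n+1)(n+2)/2` as `m → ∞`. -/
theorem Gamma_pointwise_limit (n : ℕ) :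
    ∃ M : ℕ, ∀ m : ℕ, M ≤ m → GammaG m n = (n + 1) * (n + 2) / 2 := by
  refine ⟨n + 3, fun m hm => ?_⟩
  have hinj : Set.InjOn (normalForm m) {p | p.1 + p.2 ≤ n} :=
    normalForm_injOn.mono fun p (hp : p.1 + p.2 ≤ n) => show p.1 + p.2 + 3 ≤ m by omega
  rw [GammaG, setOf_wordLength_le_eq_image (by omega), hinj.ncard_image, ncard_setOf_add_le]
end

section
/- The relations g₀ ∘ g₁^p ∘ g₀ = g₀ hold for all p ≥ 0, and g₀ ∘ g₁^p = g₀ ∘ g₁ hold for all p ≥ 1, as equalities of self-maps of ℕ → ℕ; moreover, the maps g₁^p, g₁^p ∘ g₀, and g₁^p ∘ g₀ ∘ g₁ (over all p ∈ ℕ) are pairwise distinct. Hence the monoid generated by g₀ and g₁ has the presentation Mon⟨ f₀, f₁ | f₀ f₁^p f₀ = f₀ (p ≥ 0), f₀ f₁^p = f₀ f₁ (p ≥ 1) ⟩. -/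
/- The automaton transformation `g₀` of the limit automaton `I′` acting on
infinite words over a countably infinite alphabet, `u : ℕ → ℕ`: if `u` is
identically `0` it returns the constant sequence `1`; otherwise, with `j` the
least index where `u j ≠ 0`, positions `≤ j` become `1` and the rest are kept. -/
open Classical in
noncomputable def g0 (u : ℕ → ℕ) : ℕ → ℕ :=
  if h : ∃ j, u j ≠ 0 then
    fun i => if i ≤ Nat.find h then 1 else u i
  else fun _ => 1

/- The automaton transformation `g₁` of the limit automaton `I′`: if `u` is
identically `0` it returns the constant sequence `1`; otherwise, with `j` the
least index where `u j ≠ 0`, positions `< j` become `1`, position `j` is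
incremented, and the rest are kept. -/
open Classical in
noncomputable def g1 (u : ℕ → ℕ) : ℕ → ℕ :=
  if h : ∃ j, u j ≠ 0 then
    fun i => if i < Nat.find h then 1 else if i = Nat.find h then u i + 1 else u i
  else fun _ => 1

/-!
Both `g₀ u` and `g₁ u` have a nonzero first letter. On words `v` with `v 0 ≠ 0` the least
nonzero index is `0`, so `g₀` resets the first letter to `1` and `g₁` increments it, while
the tail is never touched: `g₁^p v = update v 0 (v 0 + p)` and `g₀ v = update v 0 1`.
This gives both relations, and reduces every product of generators to one of the normal
forms `g₁^p`, `g₁^p g₀`, `g₁^p g₀ g₁`. These are told apart by the first letter of their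
values on the words `1 1 1 …` and `2 1 1 …`, and, for the last two families, by the
second letter of their values on `0 1 0 0 …`, where `g₀` writes `1` and `g₁` writes `2`.
-/

open Function

lemma g0_eq_of_least_ne_zero {u : ℕ → ℕ} {j : ℕ} (hj : u j ≠ 0) (hlt : ∀ i < j, u i = 0) :
    g0 u = fun i => if i ≤ j then 1 else u i := by
  have h : ∃ j, u j ≠ 0 := ⟨j, hj⟩
  have hfind : Nat.find h = j := (Nat.find_eq_iff h).2 ⟨hj, fun i hi => not_not.2 (hlt i hi)⟩
  rw [g0, dif_pos h, hfind]

lemma g1_eq_of_least_ne_zero {u : ℕ → ℕ} {j : ℕ} (hj : u j ≠ 0) (hlt : ∀ i < j, u i = 0) :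
    g1 u = fun i => if i < j then 1 else if i = j then u i + 1 else u i := by
  have h : ∃ j, u j ≠ 0 := ⟨j, hj⟩
  have hfind : Nat.find h = j := (Nat.find_eq_iff h).2 ⟨hj, fun i hi => not_not.2 (hlt i hi)⟩
  rw [g1, dif_pos h, hfind]

lemma g0_apply_zero (u : ℕ → ℕ) : g0 u 0 = 1 := by
  unfold g0
  split_ifs <;> simp

lemma g1_apply_zero_ne_zero (u : ℕ → ℕ) : g1 u 0 ≠ 0 := by
  unfold g1
  split_ifs with h
  · dsimp only
    split_ifs <;> omega
  · simp

section HeadNeZero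

variable {v : ℕ → ℕ}

lemma g0_eq_update (hv : v 0 ≠ 0) : g0 v = update v 0 1 := by
  rw [g0_eq_of_least_ne_zero hv (by simp)]
  funext i
  by_cases hi : i = 0 <;> simp [hi]

lemma g1_eq_update (hv : v 0 ≠ 0) : g1 v = update v 0 (v 0 + 1) := by
  rw [g1_eq_of_least_ne_zero hv (by simp)]
  funext i
  by_cases hi : i = 0 <;> simp [hi]

lemma iterate_g1_eq_update (hv : v 0 ≠ 0) (p : ℕ) : g1^[p] v = update v 0 (v 0 + p) := by
  induction p with
  | zero => simp
  | succ p ih =>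
    rw [iterate_succ_apply', ih, g1_eq_update (by simp [hv])]
    simp [add_assoc]

lemma iterate_g1_apply_zero (hv : v 0 ≠ 0) (p : ℕ) : g1^[p] v 0 = v 0 + p := by
  simp [iterate_g1_eq_update hv]

lemma iterate_g1_apply_of_ne_zero (hv : v 0 ≠ 0) (p : ℕ) {i : ℕ} (hi : i ≠ 0) :
    g1^[p] v i = v i := by
  simp [iterate_g1_eq_update hv, hi]

lemma g0_iterate_g1 (hv : v 0 ≠ 0) (p : ℕ) : g0 (g1^[p] v) = g0 v := by
  rw [iterate_g1_eq_update hv, g0_eq_update (by simp [hv]), g0_eq_update hv]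
  simp

end HeadNeZero

lemma g0_g0 (u : ℕ → ℕ) : g0 (g0 u) = g0 u := by
  rw [g0_eq_update (by simp [g0_apply_zero]), ← g0_apply_zero u]
  simp

lemma g0_comp_iterate_g1_comp_g0 (p : ℕ) : g0 ∘ g1^[p] ∘ g0 = g0 := by
  funext u
  simp [g0_iterate_g1 (v := g0 u) (by simp [g0_apply_zero]), g0_g0]

lemma g0_comp_iterate_g1 {p : ℕ} (hp : 1 ≤ p) : g0 ∘ g1^[p] = g0 ∘ g1 := by
  obtain ⟨k, rfl⟩ := Nat.exists_eq_add_of_le' hp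
  funext u
  simp [g0_iterate_g1 (g1_apply_zero_ne_zero u)]

lemma foldr_comp_eq_normal_form (L : List ((ℕ → ℕ) → ℕ → ℕ))
    (hL : ∀ g ∈ L, g = g0 ∨ g = g1) :
    ∃ p : ℕ, L.foldr (· ∘ ·) id = g1^[p] ∨
      L.foldr (· ∘ ·) id = g1^[p] ∘ g0 ∨
      L.foldr (· ∘ ·) id = g1^[p] ∘ g0 ∘ g1 := by
  induction L with
  | nil => exact ⟨0, .inl rfl⟩
  | cons g L ih =>
    obtain ⟨p, hp⟩ := ih fun g hg => hL g (List.mem_cons_of_mem _ hg)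
    rw [List.foldr_cons]
    rcases hL g List.mem_cons_self with rfl | rfl
    · refine ⟨0, ?_⟩
      rcases hp with h | h | h <;> rw [h]
      · rcases Nat.eq_zero_or_pos p with rfl | hp1
        · exact .inr (.inl rfl)
        · exact .inr (.inr (g0_comp_iterate_g1 hp1))
      · exact .inr (.inl (g0_comp_iterate_g1_comp_g0 p))
      · exact .inr (.inr (congrArg (· ∘ g1) (g0_comp_iterate_g1_comp_g0 p)))
    · refine ⟨p + 1, ?_⟩
      rcases hp with h | h | h <;> rw [h, iterate_succ'] <;> simp [comp_assoc]

lemma g0_const_one : g0 (fun _ => 1) = fun _ => 1 := by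
  rw [g0_eq_update one_ne_zero]
  simp

lemma g0_g1_const_one : g0 (g1 fun _ => 1) = fun _ => 1 := by
  simpa [g0_const_one] using g0_iterate_g1 (v := fun _ => 1) one_ne_zero 1

lemma iterate_g1_const_one_apply_zero (p : ℕ) : g1^[p] (fun _ => 1) 0 = 1 + p :=
  iterate_g1_apply_zero (v := fun _ => 1) one_ne_zero p

lemma iterate_g1_comp_injective {f : (ℕ → ℕ) → ℕ → ℕ} (hf : f (fun _ => 1) = fun _ => 1)
    {p q : ℕ} (h : g1^[p] ∘ f = g1^[q] ∘ f) : p = q := by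
  have h₀ := congrFun (congrFun h fun _ => 1) 0
  simp only [comp_apply, hf, iterate_g1_const_one_apply_zero] at h₀
  omega

lemma iterate_g1_ne_iterate_g1_comp {f : (ℕ → ℕ) → ℕ → ℕ} (hf : ∀ u, f u 0 = 1) (p q : ℕ) :
    g1^[p] ≠ g1^[q] ∘ f := by
  have hrhs (u : ℕ → ℕ) : (g1^[q] ∘ f) u 0 = 1 + q := by
    rw [comp_apply, iterate_g1_apply_zero (v := f u) (by simp [hf]), hf]
  intro h
  have h₁ := (congrFun (congrFun h fun _ => 1) 0).trans (hrhs _)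
  have h₂ := (congrFun (congrFun h (update (fun _ => 1) 0 2)) 0).trans (hrhs _)
  rw [iterate_g1_const_one_apply_zero] at h₁
  rw [iterate_g1_apply_zero (by simp), update_self] at h₂
  omega

lemma iterate_g1_comp_g0_ne (p q : ℕ) : g1^[p] ∘ g0 ≠ g1^[q] ∘ g0 ∘ g1 := by
  intro h
  set u : ℕ → ℕ := Pi.single 1 1
  have hu₁ : u 1 ≠ 0 := by simp [u]
  have hu : ∀ i < 1, u i = 0 := by simp [u]
  have h₁ := congrFun (congrFun h u) 1
  rw [comp_apply, comp_apply, comp_apply,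
    iterate_g1_apply_of_ne_zero (v := g0 u) (by simp [g0_apply_zero]) _ one_ne_zero,
    iterate_g1_apply_of_ne_zero (v := g0 (g1 u)) (by simp [g0_apply_zero]) _ one_ne_zero,
    g0_eq_update (g1_apply_zero_ne_zero u), update_of_ne one_ne_zero,
    g0_eq_of_least_ne_zero hu₁ hu, g1_eq_of_least_ne_zero hu₁ hu] at h₁
  simp [u] at h₁

/-- The relations `g₀ g₁^p g₀ = g₀` (`p ≥ 0`) and `g₀ g₁^p = g₀ g₁` (`p ≥ 1`)
hold, the maps `g₁^p`, `g₁^p ∘ g₀`, `g₁^p ∘ g₀ ∘ g₁` are pairwise distinct, and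
every composition of maps from `{g₀, g₁}` equals one of them: the monoid
generated by `g₀`, `g₁` has the presentation
`Mon⟨ f₀, f₁ | f₀ f₁^p f₀ = f₀ (p ≥ 0), f₀ f₁^p = f₀ f₁ (p ≥ 1) ⟩`. -/
theorem limit_monoid_presentation :
    (∀ p : ℕ, g0 ∘ g1^[p] ∘ g0 = g0) ∧
    (∀ p : ℕ, 1 ≤ p → g0 ∘ g1^[p] = g0 ∘ g1) ∧
    (∀ p q : ℕ, g1^[p] = g1^[q] → p = q) ∧
    (∀ p q : ℕ, g1^[p] ∘ g0 = g1^[q] ∘ g0 → p = q) ∧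
    (∀ p q : ℕ, g1^[p] ∘ g0 ∘ g1 = g1^[q] ∘ g0 ∘ g1 → p = q) ∧
    (∀ p q : ℕ, g1^[p] ≠ g1^[q] ∘ g0) ∧
    (∀ p q : ℕ, g1^[p] ≠ g1^[q] ∘ g0 ∘ g1) ∧
    (∀ p q : ℕ, g1^[p] ∘ g0 ≠ g1^[q] ∘ g0 ∘ g1) ∧
    (∀ L : List ((ℕ → ℕ) → ℕ → ℕ), (∀ g ∈ L, g = g0 ∨ g = g1) →
      ∃ p : ℕ, L.foldr (· ∘ ·) id = g1^[p] ∨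
        L.foldr (· ∘ ·) id = g1^[p] ∘ g0 ∨
        L.foldr (· ∘ ·) id = g1^[p] ∘ g0 ∘ g1) :=
  ⟨g0_comp_iterate_g1_comp_g0, fun _ => g0_comp_iterate_g1,
    fun _ _ h => iterate_g1_comp_injective (f := id) rfl h,
    fun _ _ => iterate_g1_comp_injective g0_const_one,
    fun _ _ => iterate_g1_comp_injective g0_g1_const_one,
    iterate_g1_ne_iterate_g1_comp g0_apply_zero,
    iterate_g1_ne_iterate_g1_comp fun u => g0_apply_zero (g1 u),
    iterate_g1_comp_g0_ne, foldr_comp_eq_normal_form⟩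
end
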